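/- arXiv:1908.07331 — 9 statements merged into one kernel-verified Lean document; each statement's English description precedes it below -/
import Mathlib

section
/- Let R be a commutative ring and g(t) = a(t)b(t) a monic polynomial of degree n, where a(t) and b(t) are monic of degrees m and r = n - m respectively. Let U_a be the n×n upper triangular Toeplitz matrix whose first row is (1, a_{m-1}, ..., a_0, 0, ..., 0). Then U_a is unimodular and U_a C_g U_a^{-1} equals the block matrix with blocks [[C_b, 0], [e_1 e_r^T, L_m C_a^T L_m]], where L_m is the m×m flip (anti-identity) matrix and e_i are standard basis vectors. -/
open Polynomial Matrix

def companion {R : Type*} [CommRing R] (g : R[X]) :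
    Matrix (Fin g.natDegree) (Fin g.natDegree) R :=
  Matrix.of fun i j =>
    if (i : ℕ) = 0 then -g.coeff (g.natDegree - 1 - (j : ℕ))
    else if (i : ℕ) = (j : ℕ) + 1 then 1 else 0

/-- The flip (anti-identity) matrix `L_m`. -/
def flipMatrix {R : Type*} [CommRing R] (m : ℕ) : Matrix (Fin m) (Fin m) R :=
  Matrix.of fun i j => if (i : ℕ) + (j : ℕ) = m - 1 then 1 else 0

/-- The unimodular upper triangular Toeplitz matrix `U_a` whose first row is
`(1, a_{m-1}, ..., a_0, 0, ..., 0)`. -/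
def toeplitzU {R : Type*} [CommRing R] (a : R[X]) (n : ℕ) : Matrix (Fin n) (Fin n) R :=
  Matrix.of fun i j =>
    if (i : ℕ) ≤ (j : ℕ) ∧ (j : ℕ) - (i : ℕ) ≤ a.natDegree
      then a.coeff (a.natDegree - ((j : ℕ) - (i : ℕ))) else 0

/-- The rank-one block `e_1 e_r^T` of size `m × r`. -/
def cornerBlock {R : Type*} [CommRing R] (m r : ℕ) : Matrix (Fin m) (Fin r) R :=
  Matrix.of fun i j => if (i : ℕ) = 0 ∧ (j : ℕ) = r - 1 then 1 else 0


def Uf {R : Type*} [CommRing R] (a : R[X]) : ℕ → ℕ → R := fun i j =>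
  if j ≤ a.natDegree + i then a.coeff (a.natDegree + i - j) else 0

noncomputable def Cf {R : Type*} [CommRing R] (a b : R[X]) : ℕ → ℕ → R := fun k j =>
  if k = 0 then -(a * b).coeff (b.natDegree + a.natDegree - 1 - j)
  else if k = j + 1 then 1 else 0

def Mf {R : Type*} [CommRing R] (a b : R[X]) : ℕ → ℕ → R := fun i k =>
  if i < b.natDegree then
    (if k < b.natDegree then
      (if i = 0 then -b.coeff (b.natDegree - 1 - k) else if i = k + 1 then 1 else 0)
     else 0)
  else
    (if k < b.natDegree then (if i = b.natDegree ∧ k + 1 = b.natDegree then 1 else 0)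
     else (if k + 1 = b.natDegree + a.natDegree then -a.coeff (i - b.natDegree)
           else if i = k + 1 then 1 else 0))

section Aux
variable {R : Type*} [CommRing R]

lemma conv (a b : R[X]) (hb : b.Monic) (s : ℕ) :
    (a * b).coeff s =
      (∑ q ∈ Finset.range b.natDegree, if q ≤ s then a.coeff (s - q) * b.coeff q else 0) +
      (if b.natDegree ≤ s then a.coeff (s - b.natDegree) else 0) := by
  set r := b.natDegree with hr
  rw [mul_comm, coeff_mul, Finset.Nat.sum_antidiagonal_eq_sum_range_succ_mk]
  by_cases hrs : r ≤ s
  · rw [if_pos hrs]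
    rw [Finset.range_eq_Ico, ← Finset.sum_Ico_consecutive _ (Nat.zero_le r) (by omega : r ≤ s + 1)]
    congr 1
    · rw [← Finset.range_eq_Ico]
      refine Finset.sum_congr rfl fun q hq => ?_
      rw [Finset.mem_range] at hq
      rw [if_pos (by omega), mul_comm]
    · rw [Finset.sum_eq_single_of_mem r (by simp [Finset.mem_Ico]; omega)]
      · rw [hb.coeff_natDegree, one_mul]
      · intro k hk hkr
        rw [Finset.mem_Ico] at hk
        rw [coeff_eq_zero_of_natDegree_lt (by omega : b.natDegree < k), zero_mul]
  · rw [if_neg hrs, add_zero]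
    push_neg at hrs
    rw [← Finset.sum_filter]
    rw [show (Finset.range r).filter (fun q => q ≤ s) = Finset.range (s + 1) by
      ext x; simp [Finset.mem_filter, Finset.mem_range]; omega]
    exact Finset.sum_congr rfl fun q _ => mul_comm _ _


lemma lhs_eval (a b : R[X]) (ha : a.Monic) (i j : ℕ)
    (hi : i < b.natDegree + a.natDegree) (hj : j < b.natDegree + a.natDegree) :
    ∑ k ∈ Finset.range (b.natDegree + a.natDegree), Uf a i k * Cf a b k j =
      (if i = 0 then -(a * b).coeff (b.natDegree + a.natDegree - 1 - j) else 0) +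
      (if j + 1 < b.natDegree + a.natDegree then Uf a i (j + 1) else 0) := by
  set m := a.natDegree with hm
  set r := b.natDegree with hr
  set n := r + m with hn
  set G := (a * b).coeff (n - 1 - j) with hG
  have hsplit : ∀ k, Cf a b k j = (if k = 0 then -G else 0) + (if k = j + 1 then 1 else 0) := by
    intro k
    simp only [Cf, hG]
    split_ifs with h1 h2 <;> first | omega | ring
  calc ∑ k ∈ Finset.range n, Uf a i k * Cf a b k j
      = ∑ k ∈ Finset.range n, ((if k = 0 then Uf a i k * (-G) else 0) +
          (if k = j + 1 then Uf a i k * 1 else 0)) := by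
        refine Finset.sum_congr rfl fun k _ => ?_
        rw [hsplit, mul_add, mul_ite, mul_zero, mul_ite, mul_zero]
    _ = (if (0:ℕ) ∈ Finset.range n then Uf a i 0 * (-G) else 0) +
        (if j + 1 ∈ Finset.range n then Uf a i (j+1) * 1 else 0) := by
        rw [Finset.sum_add_distrib, Finset.sum_ite_eq' , Finset.sum_ite_eq']
    _ = _ := by
        rw [if_pos (Finset.mem_range.2 (by omega)), mul_one]
        have h0 : Uf a i 0 = if i = 0 then 1 else 0 := by
          simp only [Uf, Nat.sub_zero, if_pos (Nat.zero_le _)]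
          split_ifs with h
          · subst h; simpa using ha.coeff_natDegree
          · exact coeff_eq_zero_of_natDegree_lt (by omega)
        rw [h0]
        simp only [Finset.mem_range]
        split_ifs <;> ring

lemma main_sum (a b : R[X]) (ha : a.Monic) (hb : b.Monic) (i j : ℕ)
    (hi : i < b.natDegree + a.natDegree) (hj : j < b.natDegree + a.natDegree) :
    ∑ k ∈ Finset.range (b.natDegree + a.natDegree), Uf a i k * Cf a b k j =
    ∑ k ∈ Finset.range (b.natDegree + a.natDegree), Mf a b i k * Uf a k j := by
  set m := a.natDegree with hm
  set r := b.natDegree with hr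
  set n := r + m with hn
  rw [lhs_eval a b ha i j hi hj]
  by_cases hir : i < r
  · by_cases hi0 : i = 0
    · -- Case i = 0 < r
      subst hi0
      have hrow : ∀ k ∈ Finset.range n, Mf a b 0 k * Uf a k j =
          (if k < r then -(b.coeff (r - 1 - k) * Uf a k j) else 0) := by
        intro k _
        simp only [Mf, if_pos hir, if_pos rfl]
        split_ifs <;> ring
      rw [Finset.sum_congr rfl hrow, ← Finset.sum_filter,
        show (Finset.range n).filter (fun k => k < r) = Finset.range r by
          ext x; simp only [Finset.mem_filter, Finset.mem_range]; omega,
        Finset.sum_neg_distrib,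
        ← Finset.sum_range_reflect (fun k => b.coeff (r - 1 - k) * Uf a k j) r]
      have hstep : ∀ q ∈ Finset.range r,
          b.coeff (r - 1 - (r - 1 - q)) * Uf a (r - 1 - q) j =
          (if q ≤ n - 1 - j then a.coeff (n - 1 - j - q) * b.coeff q else 0) := by
        intro q hq
        rw [Finset.mem_range] at hq
        rw [show r - 1 - (r - 1 - q) = q by omega]
        simp only [Uf]
        split_ifs with h1 h2 h2
        · rw [show m + (r - 1 - q) - j = n - 1 - j - q by omega]; ring
        · exfalso; omega
        · exfalso; omega
        · ring
      rw [Finset.sum_congr rfl hstep]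
      have hconv := conv a b hb (n - 1 - j)
      rw [if_pos rfl]
      have : (∑ q ∈ Finset.range r, if q ≤ n - 1 - j then a.coeff (n - 1 - j - q) * b.coeff q else 0)
          = (a*b).coeff (n-1-j) - (if r ≤ n - 1 - j then a.coeff (n - 1 - j - r) else 0) := by
        rw [hconv]; ring
      rw [this]
      have hlast : (if j + 1 < n then Uf a 0 (j + 1) else 0) =
          (if r ≤ n - 1 - j then a.coeff (n - 1 - j - r) else 0) := by
        simp only [Uf]
        split_ifs with h1 h2 h3 h3 <;>
          first | rfl | (exfalso; omega) | (congr 1; omega)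
      rw [hlast]; ring
    · -- Case 0 < i < r
      have hrow : ∀ k ∈ Finset.range n, Mf a b i k * Uf a k j =
          (if k = i - 1 then Uf a k j else 0) := by
        intro k _
        simp only [Mf, if_pos hir, if_neg hi0]
        split_ifs <;> first | ring1 | (exfalso; omega)
      rw [Finset.sum_congr rfl hrow, Finset.sum_ite_eq',
        if_pos (Finset.mem_range.2 (by omega : i - 1 < n)), if_neg hi0, zero_add]
      simp only [Uf]
      split_ifs <;> first | rfl | (exfalso; omega) | (congr 1; omega)
  · -- Case r ≤ i
    have hm1 : 1 ≤ m := by omega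
    have hrow : ∀ k ∈ Finset.range n, Mf a b i k * Uf a k j =
        (if 1 ≤ i ∧ k = i - 1 then Uf a k j else 0) +
        (if k = n - 1 then -a.coeff (i - r) * Uf a k j else 0) := by
      intro k hk
      rw [Finset.mem_range] at hk
      simp only [Mf, if_neg hir]
      split_ifs <;> first | ring1 | (exfalso; omega)
    rw [Finset.sum_congr rfl hrow, Finset.sum_add_distrib, Finset.sum_ite_eq',
      if_pos (Finset.mem_range.2 (by omega : n - 1 < n))]
    have hU1 : Uf a (n - 1) j = if j = n - 1 then 1 else 0 := by
      simp only [Uf]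
      rw [if_pos (by omega)]
      split_ifs with h
      · rw [show m + (n - 1) - j = m by omega]; exact ha.coeff_natDegree
      · exact coeff_eq_zero_of_natDegree_lt (by omega)
    by_cases hi1 : 1 ≤ i
    · have hc : ∀ k, (1 ≤ i ∧ k = i - 1) = (k = i - 1) := fun k => by
        simp [hi1]
      simp only [hc]
      rw [Finset.sum_ite_eq', if_pos (Finset.mem_range.2 (by omega : i - 1 < n)),
        if_neg (by omega : ¬ i = 0), hU1, zero_add]
      by_cases hjn : j = n - 1
      · rw [if_neg (show ¬ j + 1 < n by omega), if_pos hjn, mul_one]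
        have : Uf a (i - 1) j = a.coeff (i - r) := by
          simp only [Uf]
          rw [if_pos (by omega), show m + (i - 1) - j = i - r by omega]
        rw [this]; ring
      · rw [if_pos (show j + 1 < n by omega), if_neg hjn, mul_zero, add_zero]
        simp only [Uf]
        split_ifs <;> first | rfl | (exfalso; omega) | (congr 1; omega)
    · have hi0 : i = 0 := by omega
      have hr0 : r = 0 := by omega
      subst hi0
      have hc : ∀ k : ℕ, ((1:ℕ) ≤ 0 ∧ k = 0 - 1) = False := fun k => by simp
      simp only [hc, if_false, Finset.sum_const_zero, zero_add, hU1]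
      have hGa : (a * b).coeff (n - 1 - j) = a.coeff (n - 1 - j) := by
        rw [conv a b hb]
        simp [← hr, hr0]
      simp only [if_true, eq_self_iff_true]
      rw [hGa, show (0:ℕ) - r = 0 from Nat.zero_sub r]
      by_cases hjn : j = n - 1
      · rw [if_neg (show ¬ j + 1 < n by omega), if_pos hjn, add_zero, mul_one, hjn,
          show n - 1 - (n - 1) = 0 by omega]
      · rw [if_pos (show j + 1 < n by omega), if_neg hjn, mul_zero]
        have h2 : Uf a 0 (j + 1) = a.coeff (n - 1 - j) := by
          simp only [Uf]
          rw [if_pos (by omega), show m + 0 - (j+1) = n - 1 - j by omega]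
        rw [h2]; ring

lemma toeplitz_eq_Uf (a : R[X]) (ha : a.Monic) (n : ℕ) (i j : Fin n) :
    toeplitzU a n i j = Uf a i j := by
  simp only [toeplitzU, Uf, Matrix.of_apply]
  split_ifs with h1 h2 h2
  · congr 1; omega
  · exfalso; omega
  · exact (coeff_eq_zero_of_natDegree_lt (by omega)).symm
  · rfl


lemma flip_conj (a : R[X]) (i k : Fin a.natDegree) :
    (flipMatrix a.natDegree * (companion a)ᵀ * flipMatrix a.natDegree :
        Matrix (Fin a.natDegree) (Fin a.natDegree) R) i k =
      if (k : ℕ) = a.natDegree - 1 then -a.coeff i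
      else if (i : ℕ) = (k : ℕ) + 1 then 1 else 0 := by
  have hmm : ∀ x : Fin a.natDegree, a.natDegree - 1 - (x:ℕ) < a.natDegree := fun x => by omega
  have h2 : ∀ (X : Matrix (Fin a.natDegree) (Fin a.natDegree) R) (i k : Fin a.natDegree),
      ((flipMatrix a.natDegree * X : Matrix (Fin a.natDegree) (Fin a.natDegree) R)) i k
        = X ⟨a.natDegree - 1 - i, hmm i⟩ k := by
    intro X i k
    rw [Matrix.mul_apply, Finset.sum_eq_single (⟨a.natDegree - 1 - i, hmm i⟩ : Fin a.natDegree)]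
    · simp only [flipMatrix, Matrix.of_apply]
      rw [if_pos (by omega), one_mul]
    · intro q _ hq
      simp only [flipMatrix, Matrix.of_apply]
      rw [if_neg (fun hc => hq (by apply Fin.ext; simp only [Fin.val_mk]; omega)), zero_mul]
    · intro h; exact absurd (Finset.mem_univ _) h
  have h1 : ∀ (X : Matrix (Fin a.natDegree) (Fin a.natDegree) R) (i k : Fin a.natDegree),
      ((X * flipMatrix a.natDegree : Matrix (Fin a.natDegree) (Fin a.natDegree) R)) i k
        = X i ⟨a.natDegree - 1 - k, hmm k⟩ := by
    intro X i k
    rw [Matrix.mul_apply, Finset.sum_eq_single (⟨a.natDegree - 1 - k, hmm k⟩ : Fin a.natDegree)]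
    · simp only [flipMatrix, Matrix.of_apply]
      rw [if_pos (by omega), mul_one]
    · intro q _ hq
      simp only [flipMatrix, Matrix.of_apply]
      rw [if_neg (fun hc => hq (by apply Fin.ext; simp only [Fin.val_mk]; omega)), mul_zero]
    · intro h; exact absurd (Finset.mem_univ _) h
  rw [h1, h2, Matrix.transpose_apply]
  simp only [companion, Matrix.of_apply, Fin.val_mk]
  have hi := i.isLt
  have hk := k.isLt
  split_ifs <;> first | rfl | (exfalso; omega) | (congr 2 <;> omega) | (congr 2; omega)

lemma main_sum'' {R : Type*} [CommRing R] (a b : R[X]) (ha : a.Monic) (hb : b.Monic)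
    (n : ℕ) (hn : n = b.natDegree + a.natDegree) (i j : ℕ) (hi : i < n) (hj : j < n) :
    ∑ k ∈ Finset.range n, Uf a i k * Cf a b k j =
    ∑ k ∈ Finset.range n, Mf a b i k * Uf a k j := by
  subst hn; exact main_sum a b ha hb i j hi hj

lemma comp_eq_Cf (a b g : R[X]) (hg : g = a * b)
    (hdeg : g.natDegree = b.natDegree + a.natDegree) (k j : Fin g.natDegree) :
    companion g k j = Cf a b k j := by
  subst hg
  simp only [companion, Cf, Matrix.of_apply, hdeg]

lemma toeplitz_det (a : R[X]) (ha : a.Monic) (n : ℕ) : (toeplitzU a n).det = 1 := by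
  have htri : (toeplitzU a n).BlockTriangular id := by
    intro i j hij
    rw [id_eq, id_eq, Fin.lt_def] at hij
    simp only [toeplitzU, Matrix.of_apply]
    rw [if_neg (by omega)]
  rw [Matrix.det_of_upperTriangular htri]
  have : ∀ i : Fin n, toeplitzU a n i i = 1 := by
    intro i
    simp only [toeplitzU, Matrix.of_apply]
    rw [if_pos (by omega), Nat.sub_self, Nat.sub_zero]
    exact ha.coeff_natDegree
  simp [this]

lemma M_entry (a b : R[X]) (n : ℕ) (hrm : b.natDegree + a.natDegree = n) (i k : Fin n) :
    (Matrix.reindex (finSumFinEquiv.trans (finCongr hrm)) (finSumFinEquiv.trans (finCongr hrm))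
      (Matrix.fromBlocks (companion b) 0 (cornerBlock a.natDegree b.natDegree)
        (flipMatrix a.natDegree * (companion a)ᵀ * flipMatrix a.natDegree))) i k
    = Mf a b i k := by
  set e : Fin b.natDegree ⊕ Fin a.natDegree ≃ Fin n :=
    finSumFinEquiv.trans (finCongr hrm) with he
  have hlt : ∀ (x : Fin n) (hx : (x : ℕ) < b.natDegree), e.symm x = Sum.inl ⟨x, hx⟩ := by
    intro x hx
    rw [Equiv.symm_apply_eq]
    apply Fin.ext
    simp [he]
  have hge : ∀ (x : Fin n) (hx : b.natDegree ≤ (x : ℕ)),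
      e.symm x = Sum.inr ⟨(x : ℕ) - b.natDegree, by omega⟩ := by
    intro x hx
    rw [Equiv.symm_apply_eq]
    apply Fin.ext
    simp [he]
    omega
  rw [Matrix.reindex_apply, Matrix.submatrix_apply]
  have hik := i.isLt
  have hkk := k.isLt
  by_cases hi : (i : ℕ) < b.natDegree <;> by_cases hk : (k : ℕ) < b.natDegree
  · rw [hlt i hi, hlt k hk, Matrix.fromBlocks_apply₁₁]
    simp only [companion, Matrix.of_apply, Mf, if_pos hi, if_pos hk, Fin.val_mk]
  · rw [hlt i hi, hge k (by omega), Matrix.fromBlocks_apply₁₂]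
    simp only [Matrix.zero_apply, Mf, if_pos hi, if_neg hk]
  · rw [hge i (by omega), hlt k hk, Matrix.fromBlocks_apply₂₁]
    simp only [cornerBlock, Matrix.of_apply, Mf, if_neg hi, if_pos hk, Fin.val_mk]
    split_ifs <;> first | rfl | (exfalso; omega)
  · rw [hge i (by omega), hge k (by omega), Matrix.fromBlocks_apply₂₂, flip_conj]
    simp only [Mf, if_neg hi, if_neg hk, Fin.val_mk]
    split_ifs <;> first | rfl | (exfalso; omega)


end Aux

/-- If `g = a b` with `a, b` monic, then `U_a` is unimodular and conjugating the
companion matrix `C_g` by `U_a` yields the block matrix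
`[[C_b, 0], [e_1 e_r^T, L_m C_a^T L_m]]`. -/
theorem stmt2 {R : Type*} [CommRing R] (g a b : R[X]) (ha : a.Monic) (hb : b.Monic)
    (hgab : g = a * b) :
    letI e : Fin b.natDegree ⊕ Fin a.natDegree ≃ Fin g.natDegree :=
      finSumFinEquiv.trans (finCongr
        (show b.natDegree + a.natDegree = g.natDegree by
          rw [hgab, Polynomial.Monic.natDegree_mul ha hb, Nat.add_comm]))
    IsUnit (toeplitzU a g.natDegree).det ∧
    toeplitzU a g.natDegree * companion g * (toeplitzU a g.natDegree)⁻¹ =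
      Matrix.reindex e e
        (Matrix.fromBlocks (companion b) 0
          (cornerBlock a.natDegree b.natDegree)
          (flipMatrix a.natDegree * (companion a)ᵀ * flipMatrix a.natDegree)) := by
  have hrm : b.natDegree + a.natDegree = g.natDegree := by
    rw [hgab, Polynomial.Monic.natDegree_mul ha hb, Nat.add_comm]
  show IsUnit (toeplitzU a g.natDegree).det ∧
    toeplitzU a g.natDegree * companion g * (toeplitzU a g.natDegree)⁻¹ =
      Matrix.reindex (finSumFinEquiv.trans (finCongr hrm)) (finSumFinEquiv.trans (finCongr hrm))
        (Matrix.fromBlocks (companion b) 0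
          (cornerBlock a.natDegree b.natDegree)
          (flipMatrix a.natDegree * (companion a)ᵀ * flipMatrix a.natDegree))
  have hdet : IsUnit (toeplitzU a g.natDegree).det := by
    rw [toeplitz_det a ha]; exact isUnit_one
  refine ⟨hdet, ?_⟩
  set M := Matrix.reindex (finSumFinEquiv.trans (finCongr hrm)) (finSumFinEquiv.trans (finCongr hrm))
      (Matrix.fromBlocks (companion b) 0
        (cornerBlock a.natDegree b.natDegree)
        (flipMatrix a.natDegree * (companion a)ᵀ * flipMatrix a.natDegree)) with hM
  have key : toeplitzU a g.natDegree * companion g = M * toeplitzU a g.natDegree := by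
    ext i j
    rw [Matrix.mul_apply, Matrix.mul_apply]
    calc ∑ k : Fin g.natDegree, toeplitzU a g.natDegree i k * companion g k j
        = ∑ k : Fin g.natDegree, Uf a (i : ℕ) (k : ℕ) * Cf a b (k : ℕ) (j : ℕ) :=
          Finset.sum_congr rfl fun k _ => by
            rw [toeplitz_eq_Uf a ha, comp_eq_Cf a b g hgab hrm.symm]
      _ = ∑ k ∈ Finset.range g.natDegree, Uf a (i : ℕ) k * Cf a b k (j : ℕ) :=
          Fin.sum_univ_eq_sum_range (fun k => Uf a (i : ℕ) k * Cf a b k (j : ℕ)) g.natDegree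
      _ = ∑ k ∈ Finset.range g.natDegree, Mf a b (i : ℕ) k * Uf a k (j : ℕ) :=
          main_sum'' a b ha hb g.natDegree hrm.symm i j i.isLt j.isLt
      _ = ∑ k : Fin g.natDegree, Mf a b (i : ℕ) (k : ℕ) * Uf a (k : ℕ) (j : ℕ) :=
          (Fin.sum_univ_eq_sum_range (fun k => Mf a b (i : ℕ) k * Uf a k (j : ℕ)) g.natDegree).symm
      _ = ∑ k : Fin g.natDegree, M i k * toeplitzU a g.natDegree k j :=
          Finset.sum_congr rfl fun k _ => by
            rw [toeplitz_eq_Uf a ha, hM, M_entry]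
  calc toeplitzU a g.natDegree * companion g * (toeplitzU a g.natDegree)⁻¹
      = M * toeplitzU a g.natDegree * (toeplitzU a g.natDegree)⁻¹ := by rw [key]
    _ = M * (toeplitzU a g.natDegree * (toeplitzU a g.natDegree)⁻¹) := by rw [Matrix.mul_assoc]
    _ = M := by rw [Matrix.mul_nonsing_inv _ hdet, Matrix.mul_one]
end

section
/- Let R be an elementary divisor domain, g(t) ∈ R[t] monic of degree n, and a(t) a monic divisor of g(t) in R[t] of degree m. Then the matrix a(C_g) is equivalent over R to the diagonal matrix I_{n-m} ⊕ 0_{m×m}; that is, the Smith form of a(C_g) has n - m invariant factors equal to 1 and m invariant factors equal to 0. -/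
open Polynomial Matrix

/-- An elementary divisor domain: for any `a b c` there are `x y z w` with
`gcd(a,b,c) = zxa + zyb + wyc`. -/
def IsEDD (R : Type*) [CommRing R] : Prop :=
  ∀ a b c : R, ∃ d x y z w : R,
    (d ∣ a ∧ d ∣ b ∧ d ∣ c ∧ ∀ e : R, e ∣ a → e ∣ b → e ∣ c → e ∣ d) ∧
    d = z * x * a + z * y * b + w * y * c

/-! Write `g = a * b` and record a polynomial of degree `< n` by its coefficients in degrees
`n - 1, …, 0`, as a row. Right multiplication by `companion g` is then multiplication by `X`
modulo `g`, hence right multiplication by `aeval (companion g) a` is multiplication by `a` modulo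
`g`. The monic polynomials `X ^ i` (`i < deg b`) and `X ^ i * b` (`i < deg a`) have distinct
degrees `< n`, so their rows form a permuted unitriangular matrix `E`. Multiplication by `a` kills
the second family and sends the first to `a * X ^ i`; together with `X ^ i` (`i < deg a`) these
are monic of degrees `n - 1, …, 0`, giving a unitriangular `F` with `E * a(C_g) = (I ⊕ 0) * F`. -/

namespace Polynomial

lemma modByMonic_X_mul {R : Type*} [CommRing R] [Nontrivial R] {g : R[X]} (hg : g.Monic)
    (p : R[X]) :
    (X * p) %ₘ g = X * (p %ₘ g) - C ((p %ₘ g).coeff (g.natDegree - 1)) * g := by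
  have hp := modByMonic_add_div p g
  set r := p %ₘ g
  set c := r.coeff (g.natDegree - 1)
  have hr : ∀ d, g.natDegree ≤ d → r.coeff d = 0 := fun d hd =>
    coeff_eq_zero_of_degree_lt <| (degree_modByMonic_lt p hg).trans_le <|
      (degree_le_natDegree).trans (by exact_mod_cast hd)
  rw [modByMonic_eq_of_dvd_sub hg (p₂ := X * r - C c * g)
    ⟨X * (p /ₘ g) + C c, by linear_combination (-X) * hp⟩]
  refine (modByMonic_eq_self_iff hg).2 ?_
  rw [degree_eq_natDegree hg.ne_zero, degree_lt_iff_coeff_zero]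
  intro d hd
  rw [coeff_sub, coeff_C_mul]
  rcases d with _ | d
  · simp [c, hr (g.natDegree - 1) (by omega)]
  · rw [coeff_X_mul]
    rcases hd.eq_or_lt with hd | hd
    · simp [c, ← hd, hg.coeff_natDegree, show g.natDegree - 1 = d by omega]
    · simp [hr d (by omega), coeff_eq_zero_of_natDegree_lt hd]

end Polynomial

section RevCoeffMatrix

variable {R ι : Type*} [CommRing R]

def revCoeffMatrix (n : ℕ) (p : ι → R[X]) : Matrix ι (Fin n) R :=
  Matrix.of fun j i => (p j).coeff (n - 1 - i)

lemma revCoeffMatrix_mul_companion (g : R[X]) (p : ι → R[X]) :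
    revCoeffMatrix g.natDegree p * companion g =
      revCoeffMatrix g.natDegree fun j => X * p j - C ((p j).coeff (g.natDegree - 1)) * g := by
  ext j i
  -- column `i` of `companion g` is supported on rows `0` and `i + 1`
  have hsplit : ∀ l : ℕ, ((if l = 0 then -g.coeff (g.natDegree - 1 - i) else
      if l = i + 1 then 1 else 0) : R) =
      (if l = 0 then -g.coeff (g.natDegree - 1 - i) else 0) + if l = i + 1 then 1 else 0 := by
    intro l; split_ifs <;> first | omega | simp
  simp only [revCoeffMatrix, companion, mul_apply, of_apply]
  rw [Fin.sum_univ_eq_sum_range (fun l => (p j).coeff (g.natDegree - 1 - l) *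
    (if l = 0 then -g.coeff (g.natDegree - 1 - i) else if l = i + 1 then 1 else 0))]
  simp only [hsplit, mul_add, Finset.sum_add_distrib, mul_ite, mul_zero, mul_one,
    Finset.sum_ite_eq', Fin.pos i, Finset.mem_range, coeff_sub, coeff_C_mul, if_true,
    Nat.sub_zero]
  split_ifs with hi
  · rw [show g.natDegree - 1 - i = g.natDegree - 1 - (i + 1) + 1 by omega, coeff_X_mul]; ring
  · rw [show g.natDegree - 1 - i = 0 by omega, coeff_X_mul_zero]; ring

lemma det_revCoeffMatrix_of_natDegree_eq {n : ℕ} (p : Fin n → R[X]) (hp : ∀ j, (p j).Monic)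
    (hdeg : ∀ j, (p j).natDegree = n - 1 - j) : (revCoeffMatrix n p).det = 1 := by
  rw [det_of_isUpperTriangular]
  · refine Finset.prod_eq_one fun j _ => ?_
    simpa [revCoeffMatrix, hdeg j] using (hp j).coeff_natDegree
  · intro j i hij
    have : (i : ℕ) < j := hij
    exact coeff_eq_zero_of_natDegree_lt (by rw [hdeg]; omega)

lemma isUnit_det_revCoeffMatrix {n : ℕ} (p : Fin n → R[X]) (hp : ∀ j, (p j).Monic)
    (hlt : ∀ j, (p j).natDegree < n) (hinj : Function.Injective fun j => (p j).natDegree) :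
    IsUnit (revCoeffMatrix n p).det := by
  let τ (j : Fin n) : Fin n := Fin.rev ⟨(p j).natDegree, hlt j⟩
  have hτ : Function.Injective τ := fun i j h => hinj (by simpa [τ] using h)
  let σ := Equiv.ofBijective τ hτ.bijective_of_finite
  have hperm : revCoeffMatrix n p = (revCoeffMatrix n (p ∘ σ.symm)).submatrix σ id := by
    ext; simp [revCoeffMatrix]
  rw [hperm, det_permute, det_revCoeffMatrix_of_natDegree_eq (p ∘ σ.symm) (fun j => hp _)]
  · rw [mul_one]
    exact (Units.isUnit _).map (Int.castRingHom R)
  · intro d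
    have h : τ (σ.symm d) = d := σ.apply_symm_apply d
    simp only [τ, Fin.ext_iff, Fin.val_rev] at h
    have := hlt (σ.symm d)
    simp only [Function.comp_apply]
    omega

variable [Nontrivial R] {g : R[X]}

lemma revCoeffMatrix_modByMonic_mul_companion (hg : g.Monic) (p : ι → R[X]) :
    revCoeffMatrix g.natDegree (fun j => p j %ₘ g) * companion g =
      revCoeffMatrix g.natDegree fun j => (X * p j) %ₘ g := by
  simp only [revCoeffMatrix_mul_companion, modByMonic_X_mul hg]

lemma revCoeffMatrix_modByMonic_mul_aeval_companion (hg : g.Monic) (q : R[X]) (p : ι → R[X]) :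
    revCoeffMatrix g.natDegree (fun j => p j %ₘ g) * aeval (companion g) q =
      revCoeffMatrix g.natDegree fun j => (q * p j) %ₘ g := by
  induction q using Polynomial.induction_on generalizing p with
  | C c =>
    ext j i
    simp [revCoeffMatrix, Algebra.algebraMap_eq_smul_one, ← smul_eq_C_mul, smul_modByMonic]
  | add q₁ q₂ h₁ h₂ =>
    rw [map_add, Matrix.mul_add, h₁, h₂]
    ext j i
    simp [revCoeffMatrix, add_mul, add_modByMonic]
  | monomial k c ih =>
    rw [pow_succ, ← mul_assoc, map_mul, aeval_X, ← Matrix.mul_assoc, ih,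
      revCoeffMatrix_modByMonic_mul_companion hg]
    simp only [mul_assoc, mul_left_comm X]

end RevCoeffMatrix

section AdaptedBases

variable {R : Type*} [CommRing R] {a b : R[X]}

noncomputable def kernelAdaptedPolys (b : R[X]) (n : ℕ) (j : Fin n) : R[X] :=
  if (j : ℕ) < b.natDegree then X ^ (b.natDegree - 1 - j) else X ^ (n - 1 - j) * b

noncomputable def imageAdaptedPolys (a b : R[X]) (n : ℕ) (j : Fin n) : R[X] :=
  if (j : ℕ) < b.natDegree then a * X ^ (b.natDegree - 1 - j) else X ^ (n - 1 - j)

lemma monic_kernelAdaptedPolys (hb : b.Monic) {n : ℕ} (j : Fin n) :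
    (kernelAdaptedPolys b n j).Monic := by
  unfold kernelAdaptedPolys
  split_ifs
  exacts [monic_X_pow _, (monic_X_pow _).mul hb]

lemma monic_imageAdaptedPolys (ha : a.Monic) {n : ℕ} (j : Fin n) :
    (imageAdaptedPolys a b n j).Monic := by
  unfold imageAdaptedPolys
  split_ifs
  exacts [ha.mul (monic_X_pow _), monic_X_pow _]

variable [Nontrivial R]

lemma natDegree_kernelAdaptedPolys (hb : b.Monic) {n : ℕ} (j : Fin n) :
    (kernelAdaptedPolys b n j).natDegree =
      if (j : ℕ) < b.natDegree then b.natDegree - 1 - j else n - 1 - j + b.natDegree := by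
  unfold kernelAdaptedPolys
  split_ifs
  exacts [natDegree_X_pow _, by rw [(monic_X_pow _).natDegree_mul hb, natDegree_X_pow]]

lemma natDegree_kernelAdaptedPolys_lt (hb : b.Monic) {n : ℕ} (hbn : b.natDegree ≤ n)
    (j : Fin n) : (kernelAdaptedPolys b n j).natDegree < n := by
  rw [natDegree_kernelAdaptedPolys hb]
  split_ifs <;> omega

lemma isUnit_det_revCoeffMatrix_kernelAdaptedPolys (hb : b.Monic) {n : ℕ}
    (hbn : b.natDegree ≤ n) : IsUnit (revCoeffMatrix n (kernelAdaptedPolys b n)).det := by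
  refine isUnit_det_revCoeffMatrix _ (monic_kernelAdaptedPolys hb)
    (natDegree_kernelAdaptedPolys_lt hb hbn) fun i j h => ?_
  simp only [natDegree_kernelAdaptedPolys hb] at h
  ext
  split_ifs at h <;> omega

lemma natDegree_imageAdaptedPolys (ha : a.Monic) {n : ℕ} (hn : a.natDegree + b.natDegree = n)
    (j : Fin n) : (imageAdaptedPolys a b n j).natDegree = n - 1 - j := by
  unfold imageAdaptedPolys
  split_ifs
  · rw [ha.natDegree_mul (monic_X_pow _), natDegree_X_pow]; omega
  · exact natDegree_X_pow _

lemma isUnit_det_revCoeffMatrix_imageAdaptedPolys (ha : a.Monic) {n : ℕ}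
    (hn : a.natDegree + b.natDegree = n) :
    IsUnit (revCoeffMatrix n (imageAdaptedPolys a b n)).det := by
  rw [det_revCoeffMatrix_of_natDegree_eq _ (monic_imageAdaptedPolys ha)
    (natDegree_imageAdaptedPolys ha hn)]
  exact isUnit_one

lemma mul_kernelAdaptedPolys_modByMonic (ha : a.Monic) (hb : b.Monic)
    (j : Fin (a * b).natDegree) :
    (a * kernelAdaptedPolys b _ j) %ₘ (a * b) =
      if (j : ℕ) < b.natDegree then imageAdaptedPolys a b _ j else 0 := by
  have hn := ha.natDegree_mul hb
  unfold kernelAdaptedPolys imageAdaptedPolys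
  split_ifs
  · refine (modByMonic_eq_self_iff (ha.mul hb)).2 (degree_lt_degree ?_)
    rw [ha.natDegree_mul (monic_X_pow _), natDegree_X_pow]
    omega
  · exact (modByMonic_eq_zero_iff_dvd (ha.mul hb)).2 ⟨X ^ _, by ring⟩

theorem revCoeffMatrix_kernelAdaptedPolys_mul_aeval_companion (ha : a.Monic) (hb : b.Monic) :
    revCoeffMatrix _ (kernelAdaptedPolys b (a * b).natDegree) * aeval (companion (a * b)) a =
      diagonal (fun j : Fin (a * b).natDegree => if (j : ℕ) < b.natDegree then 1 else 0) *
        revCoeffMatrix _ (imageAdaptedPolys a b _) := by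
  have hbn : b.natDegree ≤ (a * b).natDegree := by rw [ha.natDegree_mul hb]; omega
  have hself (j) : kernelAdaptedPolys b _ j %ₘ (a * b) = kernelAdaptedPolys b _ j :=
    (modByMonic_eq_self_iff (ha.mul hb)).2
      (degree_lt_degree (natDegree_kernelAdaptedPolys_lt hb hbn j))
  have h := revCoeffMatrix_modByMonic_mul_aeval_companion (ha.mul hb) a
    (kernelAdaptedPolys b (a * b).natDegree)
  simp only [hself, mul_kernelAdaptedPolys_modByMonic ha hb] at h
  rw [h]
  ext j i
  simp only [revCoeffMatrix, diagonal_mul, of_apply]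
  split_ifs <;> simp

end AdaptedBases

theorem stmt3_general {R : Type*} [CommRing R] [IsDomain R]
    (g a : R[X]) (hg : g.Monic) (ha : a.Monic) (hdvd : a ∣ g) :
    ∃ U V : Matrix (Fin g.natDegree) (Fin g.natDegree) R,
      IsUnit U.det ∧ IsUnit V.det ∧
      U * Polynomial.aeval (companion g) a * V =
        Matrix.of (fun (i j : Fin g.natDegree) =>
          if (i : ℕ) = (j : ℕ) ∧ (i : ℕ) < g.natDegree - a.natDegree then 1 else 0) := by
  obtain ⟨b, rfl⟩ := hdvd
  have hb := ha.of_mul_monic_left hg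
  have hn := (ha.natDegree_mul hb).symm
  have hF := isUnit_det_revCoeffMatrix_imageAdaptedPolys ha hn
  refine ⟨_, _, isUnit_det_revCoeffMatrix_kernelAdaptedPolys hb (by omega),
    isUnit_nonsing_inv_det _ hF, ?_⟩
  rw [revCoeffMatrix_kernelAdaptedPolys_mul_aeval_companion ha hb, Matrix.mul_assoc,
    mul_nonsing_inv _ hF, mul_one]
  ext i j
  simp only [diagonal_apply, of_apply, Fin.val_inj, ite_and,
    show (a * b).natDegree - a.natDegree = b.natDegree by omega]

/-- If `a` is a monic divisor of the monic `g` of degree `n`, with `deg a = m`, then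
`a(C_g)` is equivalent over `R` to `I_{n-m} ⊕ 0_{m×m}`. -/
theorem stmt3 {R : Type*} [CommRing R] [IsDomain R] (hR : IsEDD R)
    (g a : R[X]) (hg : g.Monic) (ha : a.Monic) (hdvd : a ∣ g) :
    ∃ U V : Matrix (Fin g.natDegree) (Fin g.natDegree) R,
      IsUnit U.det ∧ IsUnit V.det ∧
      U * Polynomial.aeval (companion g) a * V =
        Matrix.of (fun (i j : Fin g.natDegree) =>
          if (i : ℕ) = (j : ℕ) ∧ (i : ℕ) < g.natDegree - a.natDegree then 1 else 0) :=
  stmt3_general g a hg ha hdvd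
end

section
/- Let R be an elementary divisor domain, g(t) ∈ R[t] monic of degree n, f(t) ∈ R[t], and suppose g(t) = G(t)z(t) and f(t) = F(t)z(t) where z(t) is a monic common divisor of f and g of degree m. Then the matrix f(C_g) is equivalent over R to the direct sum F(C_G) ⊕ 0_{m×m}. In particular F(C_G) has invariant factors s_1,...,s_r if and only if f(C_g) has invariant factors s_1,...,s_r together with 0 repeated m times. -/
/-
Let `n = deg g`, `d = deg G`, `m = deg z`. In `R[X]/(g)` the truncations
`hornerPoly g j = g div X^(n-j)`, `j < n`, form a basis in which multiplication by `X` has matrix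
`C_g`; hence `f(C_g)` is the matrix of multiplication by `f`. Any `n` monic polynomials of distinct
degrees `< n` form a basis of `R[X]/(g)` (unitriangular change of basis), so we may read this map
from the source basis `hornerPoly G j`, `G X^k` to the target basis `z · hornerPoly G j`, `X^k`
(`j < d`, `k < m`). Multiplication by `f = F z` kills `G X^k`, as `g = G z ∣ F z G X^k`, and sends
`hornerPoly G j` to `z · (F · hornerPoly G j)`; modulo `g = G z` this only depends on
`F · hornerPoly G j` modulo `G`, whose coordinates form the `j`-th column of `F(C_G)`.
So the matrix is `F(C_G) ⊕ 0`.
-/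

open Polynomial Matrix

namespace Companion

variable {R : Type*} [CommRing R]

theorem coeff_iterate_divX (p : R[X]) (k i : ℕ) : (divX^[k] p).coeff i = p.coeff (i + k) := by
  induction k generalizing i with
  | zero => rfl
  | succ k ih => rw [Function.iterate_succ_apply', coeff_divX, ih, add_right_comm, add_assoc]

noncomputable def hornerPoly (g : R[X]) (j : ℕ) : R[X] := divX^[g.natDegree - j] g

theorem coeff_hornerPoly (g : R[X]) (j i : ℕ) :
    (hornerPoly g j).coeff i = g.coeff (i + (g.natDegree - j)) :=
  coeff_iterate_divX g _ i

theorem hornerPoly_natDegree_eq_self (g : R[X]) : hornerPoly g g.natDegree = g := by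
  simp [hornerPoly]

theorem hornerPoly_zero {g : R[X]} (hg : g.Monic) : hornerPoly g 0 = 1 := by
  ext i
  rw [coeff_hornerPoly, coeff_one]
  split_ifs with hi
  · simpa [hi] using hg.coeff_natDegree
  · exact coeff_eq_zero_of_natDegree_lt (by omega)

theorem hornerPoly_succ (g : R[X]) {j : ℕ} (hj : j < g.natDegree) :
    hornerPoly g (j + 1) = X * hornerPoly g j + C (g.coeff (g.natDegree - 1 - j)) := by
  have hdivX : hornerPoly g j = divX (hornerPoly g (j + 1)) := by
    rw [hornerPoly, hornerPoly, ← Function.iterate_succ_apply' divX]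
    congr 2
    omega
  conv_lhs => rw [← X_mul_divX_add (hornerPoly g (j + 1)), ← hdivX, coeff_hornerPoly]
  congr 3
  omega

theorem natDegree_hornerPoly_le (g : R[X]) {j : ℕ} (hj : j ≤ g.natDegree) :
    (hornerPoly g j).natDegree ≤ j :=
  natDegree_le_iff_coeff_eq_zero.2 fun i hi => by
    rw [coeff_hornerPoly]
    exact coeff_eq_zero_of_natDegree_lt (by omega)

theorem coeff_hornerPoly_self {g : R[X]} (hg : g.Monic) {j : ℕ} (hj : j ≤ g.natDegree) :
    (hornerPoly g j).coeff j = 1 := by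
  rw [coeff_hornerPoly, Nat.add_sub_cancel' hj, hg.coeff_natDegree]

theorem monic_hornerPoly {g : R[X]} (hg : g.Monic) {j : ℕ} (hj : j ≤ g.natDegree) :
    (hornerPoly g j).Monic :=
  monic_of_natDegree_le_of_coeff_eq_one j (natDegree_hornerPoly_le g hj)
    (coeff_hornerPoly_self hg hj)

theorem natDegree_hornerPoly [Nontrivial R] {g : R[X]} (hg : g.Monic) {j : ℕ}
    (hj : j ≤ g.natDegree) : (hornerPoly g j).natDegree = j :=
  natDegree_eq_of_le_of_coeff_ne_zero (natDegree_hornerPoly_le g hj)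
    (by rw [coeff_hornerPoly_self hg hj]; exact one_ne_zero)

open AdjoinRoot Module

theorem repr_powerBasisAux'_mk [Nontrivial R] {g : R[X]} (hg : g.Monic) {p : R[X]}
    (hp : p.natDegree < g.natDegree) (i : Fin g.natDegree) :
    (powerBasisAux' hg).repr (mk g p) i = p.coeff i := by
  rw [powerBasisAux'_repr_apply_to_fun, modByMonicHom_mk,
    (modByMonic_eq_self_iff hg).2 (degree_lt_degree hp)]

theorem exists_basis_adjoinRoot_of_monic [Nontrivial R] {g : R[X]} (hg : g.Monic)
    {ι : Type*} [Fintype ι] [DecidableEq ι] (v : ι → R[X]) (e : ι ≃ Fin g.natDegree)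
    (hv : ∀ i, (v i).Monic) (hdeg : ∀ i, (v i).natDegree = e i) :
    ∃ b : Basis ι R (AdjoinRoot g), ∀ i, b i = mk g (v i) := by
  set B := (powerBasisAux' hg).reindex e.symm with hBdef
  have hB : ∀ i j, B.toMatrix (fun i => mk g (v i)) i j = (v j).coeff (e i) := fun i j => by
    rw [Basis.toMatrix_apply, hBdef, Basis.repr_reindex_apply, Equiv.symm_symm,
      repr_powerBasisAux'_mk hg (by rw [hdeg]; exact (e j).isLt)]
  have htri : (reindex e e (B.toMatrix fun i => mk g (v i))).IsUpperTriangular :=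
    fun k l hlk => by
      rw [reindex_apply, submatrix_apply, hB, Equiv.apply_symm_apply]
      exact coeff_eq_zero_of_natDegree_lt (by rw [hdeg, Equiv.apply_symm_apply]; exact hlk)
  have hdet : IsUnit (B.det fun i => mk g (v i)) := by
    rw [Basis.det_apply, ← det_reindex_self e, det_of_isUpperTriangular htri,
      Finset.prod_eq_one fun k _ => ?_]
    · exact isUnit_one
    rw [reindex_apply, submatrix_apply, hB, Equiv.apply_symm_apply]
    simpa [hdeg] using (hv (e.symm k)).coeff_natDegree
  obtain ⟨hli, hspan⟩ := B.is_basis_iff_det.2 hdet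
  exact ⟨Basis.mk hli hspan.ge, Basis.mk_apply hli hspan.ge⟩

theorem root_mul_hornerBasis {g : R[X]} (hg : g.Monic)
    (b : Basis (Fin g.natDegree) R (AdjoinRoot g)) (hb : ∀ j, b j = mk g (hornerPoly g j)) (j : Fin g.natDegree) :
    root g * b j = (if h : (j : ℕ) + 1 < g.natDegree then b ⟨j + 1, h⟩ else 0)
      - g.coeff (g.natDegree - 1 - j) • b ⟨0, j.pos⟩ := by
  have hX : X * hornerPoly g j = hornerPoly g (j + 1) - C (g.coeff (g.natDegree - 1 - j)) := by
    rw [hornerPoly_succ g j.isLt]; ring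
  rw [hb j, hb ⟨0, j.pos⟩, hornerPoly_zero hg, ← mk_X, ← map_mul, hX, map_sub, smul_mk,
    smul_eq_C_mul, mul_one]
  congr 1
  split_ifs with h
  · rw [hb]
  · rw [show (j : ℕ) + 1 = g.natDegree by omega, hornerPoly_natDegree_eq_self, mk_self]

theorem toMatrixAlgEquiv_lmul_root {g : R[X]} (hg : g.Monic)
    (b : Basis (Fin g.natDegree) R (AdjoinRoot g)) (hb : ∀ j, b j = mk g (hornerPoly g j)) :
    LinearMap.toMatrixAlgEquiv b (Algebra.lmul R _ (root g)) = companion g := by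
  ext i j
  rw [LinearMap.toMatrixAlgEquiv_apply, Algebra.coe_lmul_eq_mul, LinearMap.mul_apply',
    root_mul_hornerBasis hg b hb]
  by_cases hj : (j : ℕ) + 1 < g.natDegree <;>
    simp only [companion, of_apply, hj, dite_true, dite_false, map_sub, map_smul, map_zero,
      Basis.repr_self, Finsupp.sub_apply, Finsupp.smul_apply, Finsupp.single_apply,
      Fin.ext_iff] <;>
    split_ifs <;> first | omega | simp

theorem aeval_companion_eq_toMatrix {g : R[X]} (hg : g.Monic)
    (b : Basis (Fin g.natDegree) R (AdjoinRoot g)) (hb : ∀ j, b j = mk g (hornerPoly g j))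
    (f : R[X]) : aeval (companion g) f = LinearMap.toMatrix b b (Algebra.lmul R _ (mk g f)) := by
  rw [← toMatrixAlgEquiv_lmul_root hg b hb, aeval_algHom_apply, aeval_algHom_apply, aeval_eq]
  rfl

theorem mk_mul_left_eq_of_mk_eq {G p q : R[X]} (z : R[X]) (h : mk G p = mk G q) :
    mk (G * z) (z * p) = mk (G * z) (z * q) := by
  rw [mk_eq_mk] at h ⊢
  rw [← mul_sub, mul_comm G]
  exact mul_dvd_mul_left z h

theorem toMatrix_lmul_mul_eq_fromBlocks {κ ι : Type*} [Fintype κ] [Fintype ι] [DecidableEq κ]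
    [DecidableEq ι] {G z : R[X]} (F : R[X]) (bG : Basis κ R (AdjoinRoot G)) (p : κ → R[X])
    (hbG : ∀ k, bG k = mk G (p k)) (S T : Basis (κ ⊕ ι) R (AdjoinRoot (G * z)))
    (hSl : ∀ k, S (.inl k) = mk (G * z) (p k)) (hSr : ∀ l, ∃ q, S (.inr l) = mk (G * z) (G * q))
    (hTl : ∀ k, T (.inl k) = mk (G * z) (z * p k)) :
    LinearMap.toMatrix S T (Algebra.lmul R _ (mk (G * z) (F * z))) =
      fromBlocks (LinearMap.toMatrix bG bG (Algebra.lmul R _ (mk G F))) 0 0 0 := by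
  have hcol : ∀ j, mk (G * z) (F * z) * S (.inl j) =
      ∑ k, bG.repr (mk G F * bG j) k • T (.inl k) := fun j => by
    have hmodG : mk G (F * p j) = mk G (∑ k, C (bG.repr (mk G F * bG j) k) * p k) := by
      conv_lhs => rw [map_mul, ← hbG, ← bG.sum_repr (mk G F * bG j)]
      simp only [map_sum, hbG, smul_mk, smul_eq_C_mul]
    rw [hSl, ← map_mul, show F * z * p j = z * (F * p j) by ring,
      mk_mul_left_eq_of_mk_eq z hmodG, Finset.mul_sum, map_sum]
    simp only [hTl, smul_mk, smul_eq_C_mul, mul_left_comm]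
  have hker : ∀ l, mk (G * z) (F * z) * S (.inr l) = 0 := fun l => by
    obtain ⟨q, hq⟩ := hSr l
    rw [hq, ← map_mul, mk_eq_zero]
    exact ⟨F * q, by ring⟩
  ext (i | i) (j | j) <;>
    simp only [LinearMap.toMatrix_apply, Algebra.coe_lmul_eq_mul, LinearMap.mul_apply', hcol,
      hker] <;>
    simp [LinearMap.toMatrix_apply, Finsupp.single_apply]

theorem exists_hornerBasis [Nontrivial R] {g : R[X]} (hg : g.Monic) :
    ∃ b : Basis (Fin g.natDegree) R (AdjoinRoot g), ∀ j, b j = mk g (hornerPoly g j) :=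
  exists_basis_adjoinRoot_of_monic hg (fun j : Fin g.natDegree => hornerPoly g j) (Equiv.refl _)
    (fun j => monic_hornerPoly hg j.isLt.le) (fun j => natDegree_hornerPoly hg j.isLt.le)

theorem exists_bases_toMatrix_lmul_eq_fromBlocks [Nontrivial R] {G z : R[X]} (hG : G.Monic)
    (hz : z.Monic) (F : R[X]) :
    ∃ S T : Basis (Fin G.natDegree ⊕ Fin z.natDegree) R (AdjoinRoot (G * z)),
      LinearMap.toMatrix S T (Algebra.lmul R _ (mk (G * z) (F * z))) =
        fromBlocks (aeval (companion G) F) 0 0 0 := by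
  have hdeg : G.natDegree + z.natDegree = (G * z).natDegree := (hG.natDegree_mul hz).symm
  obtain ⟨bG, hbG⟩ := exists_hornerBasis hG
  obtain ⟨S, hS⟩ := exists_basis_adjoinRoot_of_monic (hG.mul hz)
    (Sum.elim (fun k : Fin G.natDegree => hornerPoly G k)
      (fun l : Fin z.natDegree => G * X ^ (l : ℕ)))
    (finSumFinEquiv.trans (finCongr hdeg))
    (by
      rintro (k | l)
      · exact monic_hornerPoly hG k.isLt.le
      · exact hG.mul (monic_X_pow _))
    (by
      rintro (k | l)
      · simp [natDegree_hornerPoly hG k.isLt.le]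
      · simp [hG.natDegree_mul (monic_X_pow _)])
  -- `z * hornerPoly G k` has degree `m + k` and `X ^ l` has degree `l`
  obtain ⟨T, hT⟩ := exists_basis_adjoinRoot_of_monic (hG.mul hz)
    (Sum.elim (fun k : Fin G.natDegree => z * hornerPoly G k)
      (fun l : Fin z.natDegree => X ^ (l : ℕ)))
    ((Equiv.sumComm _ _).trans (finSumFinEquiv.trans (finCongr (by omega))))
    (by
      rintro (k | l)
      · exact hz.mul (monic_hornerPoly hG k.isLt.le)
      · exact monic_X_pow _)
    (by
      rintro (k | l)
      · simp [hz.natDegree_mul (monic_hornerPoly hG k.isLt.le),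
          natDegree_hornerPoly hG k.isLt.le]
      · simp)
  refine ⟨S, T, ?_⟩
  rw [aeval_companion_eq_toMatrix hG bG hbG]
  exact toMatrix_lmul_mul_eq_fromBlocks F bG _ hbG S T (fun k => hS (.inl k))
    (fun l => ⟨X ^ (l : ℕ), hS (.inr l)⟩) (fun k => hT (.inl k))

theorem toMatrix_reindex_reindex {ι κ ι' κ' M N : Type*} [Fintype ι] [Fintype ι'] [Finite κ]
    [Finite κ'] [DecidableEq ι] [DecidableEq ι'] [AddCommGroup M] [Module R M] [AddCommGroup N]
    [Module R N] (b : Basis ι R M) (c : Basis κ R N) (e₁ : ι ≃ ι') (e₂ : κ ≃ κ')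
    (f : M →ₗ[R] N) :
    LinearMap.toMatrix (b.reindex e₁) (c.reindex e₂) f =
      reindex e₂ e₁ (LinearMap.toMatrix b c f) := by
  ext
  simp [LinearMap.toMatrix_apply]

theorem reindex_fromBlocks_zero {d m n : ℕ} (hn : d + m = n) (A : Matrix (Fin d) (Fin d) R) :
    reindex (finSumFinEquiv.trans (finCongr hn)) (finSumFinEquiv.trans (finCongr hn))
        (fromBlocks A 0 0 0) =
      of fun i j : Fin n => if h : (i : ℕ) < d ∧ (j : ℕ) < d then A ⟨i, h.1⟩ ⟨j, h.2⟩ else 0 := by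
  ext i j
  obtain ⟨i, rfl⟩ := (finSumFinEquiv.trans (finCongr hn)).surjective i
  obtain ⟨j, rfl⟩ := (finSumFinEquiv.trans (finCongr hn)).surjective j
  rcases i with i | i <;> rcases j with j | j <;> simp

end Companion

open Companion in
theorem stmt5_general {R : Type*} [CommRing R]
    (g f z G F : R[X]) (hz : z.Monic) (hG : G.Monic)
    (hgz : g = G * z) (hfz : f = F * z) :
    ∃ U V : Matrix (Fin g.natDegree) (Fin g.natDegree) R,
      IsUnit U.det ∧ IsUnit V.det ∧
      U * Polynomial.aeval (companion g) f * V =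
        Matrix.of (fun (i j : Fin g.natDegree) =>
          if h : (i : ℕ) < G.natDegree ∧ (j : ℕ) < G.natDegree then
            Polynomial.aeval (companion G) F ⟨(i : ℕ), h.1⟩ ⟨(j : ℕ), h.2⟩
          else 0) := by
  nontriviality R
  subst hgz hfz
  obtain ⟨b, hb⟩ := exists_hornerBasis (hG.mul hz)
  obtain ⟨S, T, hST⟩ := exists_bases_toMatrix_lmul_eq_fromBlocks hG hz F
  let e := finSumFinEquiv.trans (finCongr (hG.natDegree_mul hz).symm)
  refine ⟨(T.reindex e).toMatrix b, b.toMatrix (S.reindex e), (T.reindex e).isUnit_det b,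
    b.isUnit_det (S.reindex e), ?_⟩
  rw [aeval_companion_eq_toMatrix (hG.mul hz) b hb,
    basis_toMatrix_mul_linearMap_toMatrix_mul_basis_toMatrix, toMatrix_reindex_reindex, hST,
    reindex_fromBlocks_zero]

/-- If `g = G z` and `f = F z` with `z` a monic common divisor of `f` and `g`
(`g`, `G` monic), then `f(C_g)` is equivalent over the elementary divisor domain `R`
to the direct sum `F(C_G) ⊕ 0_{m×m}` where `m = deg z`. -/
theorem stmt5 {R : Type*} [CommRing R] [IsDomain R] (hR : IsEDD R)
    (g f z G F : R[X]) (hg : g.Monic) (hz : z.Monic) (hG : G.Monic)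
    (hgz : g = G * z) (hfz : f = F * z) :
    ∃ U V : Matrix (Fin g.natDegree) (Fin g.natDegree) R,
      IsUnit U.det ∧ IsUnit V.det ∧
      U * Polynomial.aeval (companion g) f * V =
        Matrix.of (fun (i j : Fin g.natDegree) =>
          if h : (i : ℕ) < G.natDegree ∧ (j : ℕ) < G.natDegree then
            Polynomial.aeval (companion G) F ⟨(i : ℕ), h.1⟩ ⟨(j : ℕ), h.2⟩
          else 0) :=
  stmt5_general g f z G F hz hG hgz hfz
end

section
/- Let R be an elementary divisor domain, g(t) ∈ R[t] monic, f(t) ∈ R[t], and let z(t) be the monic greatest common divisor of f(t) and g(t), with f(t) = z(t)F(t) and g(t) = z(t)G(t). Then the last nonzero determinantal divisor of f(C_g) equals (up to units of R) the resultant Res(F, G) = ∏_{θ: G(θ)=0} F(θ). -/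
/-!
In the basis `1, θ, …, θ^(n-1)` of `R[X]/(g)`, the companion matrix `C_g` is the transpose of the
matrix of multiplication by `θ` with rows and columns in reverse order, so `f(C_g)` is, up to the
same transposition and reordering, the matrix of multiplication by `f`; in particular
`det F(C_G)` is the norm of `F` in `R[X]/(G)`, which is `Res(F, G)`. Since `f = z F` and
`g = z G`, multiplication by `f` on `R[X]/(g)` factors through the free module `R[X]/(G)` of rank
`r = deg G`: reduce modulo `G`, multiply by `F`, multiply by `z` back into `R[X]/(g)`. Thus
`f(C_g) = A · F(C_G) · P` with inner dimension `r`, which kills every `(r+1)`-minor and makes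
`det F(C_G)` divide every `r`-minor. Conversely `P` is the identity on the columns
`1, …, θ^(r-1)` and `A` is unitriangular on the rows `θ^(deg z), …, θ^(deg z + r - 1)`, so one
`r`-minor of `f(C_g)` equals `det F(C_G)`.
-/

open Polynomial Matrix

namespace Matrix

variable {R : Type*} [CommRing R]

theorem det_mul_eq_zero_of_card_lt {m k : Type*} [Fintype m] [DecidableEq m] [Fintype k]
    (A : Matrix m k R) (B : Matrix k m R) (h : Fintype.card k < Fintype.card m) :
    (A * B).det = 0 := by
  set d := Fintype.card m - Fintype.card k
  obtain ⟨e⟩ : Nonempty (k ⊕ Fin d ≃ m) := ⟨Fintype.equivOfCardEq (by simp [d]; omega)⟩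
  have hpad : A * B =
      (fromCols A 0 : Matrix m (k ⊕ Fin d) R) * (fromRows B 0 : Matrix (k ⊕ Fin d) m R) := by
    rw [fromCols_mul_fromRows, Matrix.zero_mul, add_zero]
  rw [hpad, ← submatrix_id_id (_ * _), ← submatrix_mul_equiv _ _ _ e.symm, det_mul,
    det_eq_zero_of_column_eq_zero (e (.inr ⟨0, by omega⟩)) (by simp), zero_mul]

theorem det_submatrix_mul_eq_zero_of_card_lt {m n k l : Type*} [Fintype k] [Fintype l]
    [DecidableEq l] (A : Matrix m k R) (B : Matrix k n R) (ρ : l → m) (σ : l → n)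
    (h : Fintype.card k < Fintype.card l) : ((A * B).submatrix ρ σ).det = 0 := by
  rw [submatrix_mul _ _ ρ id σ Function.bijective_id]
  exact det_mul_eq_zero_of_card_lt _ _ h

theorem det_submatrix_mul_mul {m n k : Type*} [Fintype k] [DecidableEq k]
    (A : Matrix m k R) (B : Matrix k k R) (C : Matrix k n R) (ρ : k → m) (σ : k → n) :
    ((A * B * C).submatrix ρ σ).det =
      (A.submatrix ρ id).det * B.det * (C.submatrix id σ).det := by
  rw [submatrix_mul _ _ ρ id σ Function.bijective_id,
    submatrix_mul _ _ ρ id id Function.bijective_id, det_mul, det_mul, submatrix_id_id]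

variable {m n : Type*} [Fintype m] [DecidableEq m] [Fintype n] [DecidableEq n]

theorem aeval_transpose (M : Matrix m m R) (p : R[X]) : aeval Mᵀ p = (aeval M p)ᵀ := by
  induction p using Polynomial.induction_on' with
  | add p q hp hq => simp [hp, hq]
  | monomial n a => simp [aeval_monomial, transpose_pow, ← Algebra.smul_def]

theorem aeval_submatrix_equiv_self (M : Matrix m m R) (e : n ≃ m) (p : R[X]) :
    aeval (M.submatrix e e) p = (aeval M p).submatrix e e := by
  simpa using aeval_algHom_apply (reindexAlgEquiv R R e.symm) M p

end Matrix

theorem Polynomial.Monic.X_pow_natDegree_modByMonic {R : Type*} [CommRing R] [Nontrivial R]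
    {g : R[X]} (hg : g.Monic) : X ^ g.natDegree %ₘ g = X ^ g.natDegree - g := by
  rw [modByMonic_eq_of_dvd_sub hg (p₂ := X ^ g.natDegree - g) (by simp),
    modByMonic_eq_self_iff hg, degree_eq_natDegree hg.ne_zero, ← degree_X_pow (R := R)]
  exact degree_sub_lt_left (by rw [degree_X_pow, degree_eq_natDegree hg.ne_zero])
    (monic_X_pow _).ne_zero (by rw [(monic_X_pow _).leadingCoeff, hg.leadingCoeff])

namespace AdjoinRoot

variable {R : Type*} [CommRing R] {g z G : R[X]}

theorem powerBasisAux'_apply (hg : g.Monic) (i : Fin g.natDegree) :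
    powerBasisAux' hg i = mk g (X ^ (i : ℕ)) := by
  rw [map_pow, mk_X]
  exact (powerBasis' hg).basis_eq_pow i

theorem powerBasisAux'_repr_mk (hg : g.Monic) (p : R[X]) (i : Fin g.natDegree) :
    (powerBasisAux' hg).repr (mk g p) i = (p %ₘ g).coeff i := rfl

theorem algHomOfDvd_mk (h : G ∣ g) (p : R[X]) : algHomOfDvd R g G h (mk g p) = mk G p :=
  aeval_eq p

/-- Multiplication by `z` on the representatives of degree `< deg G`; when `g = z * G` it is the
well-defined map `R[X]/(G) → R[X]/(g)`, `p ↦ z p` (`mulLeftOfMonic_mk`). -/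
noncomputable def mulLeftOfMonic (hG : G.Monic) (g z : R[X]) : AdjoinRoot G →ₗ[R] AdjoinRoot g :=
  (mkₐ g).toLinearMap ∘ₗ LinearMap.mulLeft R z ∘ₗ modByMonicHom hG

theorem mulLeftOfMonic_mk (hG : G.Monic) (hgz : g = z * G) (p : R[X]) :
    mulLeftOfMonic hG g z (mk G p) = mk g (z * p) := by
  simp only [mulLeftOfMonic, LinearMap.coe_comp, Function.comp_apply, modByMonicHom_mk,
    LinearMap.mulLeft_apply, AlgHom.toLinearMap_apply]
  rw [coe_mkₐ, mk_eq_mk, modByMonic_eq_sub_mul_div, hgz]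
  exact ⟨-(p /ₘ G), by ring⟩

theorem leftMulMatrix_mk_mul (hg : g.Monic) (hG : G.Monic) (hgz : g = z * G) (F : R[X]) :
    Algebra.leftMulMatrix (powerBasisAux' hg) (mk g (z * F)) =
      LinearMap.toMatrix (powerBasisAux' hG) (powerBasisAux' hg) (mulLeftOfMonic hG g z) *
        Algebra.leftMulMatrix (powerBasisAux' hG) (mk G F) *
        LinearMap.toMatrix (powerBasisAux' hg) (powerBasisAux' hG)
          (algHomOfDvd R g G (hgz ▸ dvd_mul_left G z)).toLinearMap := by
  simp only [Algebra.leftMulMatrix_apply, ← LinearMap.toMatrix_comp]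
  congr 1
  ext x
  induction x using AdjoinRoot.induction_on with | ih p => ?_
  simp only [LinearMap.coe_comp, Function.comp_apply, AlgHom.toLinearMap_apply, algHomOfDvd_mk,
    Algebra.coe_lmul_eq_mul, LinearMap.mul_apply', ← map_mul, mulLeftOfMonic_mk hG hgz, mul_assoc]

theorem toMatrix_algHomOfDvd_submatrix_castLE (hg : g.Monic) (hG : G.Monic) (h : G ∣ g)
    (hGg : G.natDegree ≤ g.natDegree) :
    (LinearMap.toMatrix (powerBasisAux' hg) (powerBasisAux' hG)
      (algHomOfDvd R g G h).toLinearMap).submatrix id (Fin.castLE hGg) = 1 := by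
  ext i j
  rw [submatrix_apply, LinearMap.toMatrix_apply, id, powerBasisAux'_apply, Fin.val_castLE,
    AlgHom.toLinearMap_apply, algHomOfDvd_mk, ← powerBasisAux'_apply hG j,
    Module.Basis.repr_self, Finsupp.single_apply, one_apply]
  exact if_congr eq_comm rfl rfl

variable [Nontrivial R]

theorem toMatrix_mulLeftOfMonic_apply (hg : g.Monic) (hz : z.Monic) (hG : G.Monic)
    (hgz : g = z * G) (i : Fin g.natDegree) (k : Fin G.natDegree) :
    LinearMap.toMatrix (powerBasisAux' hG) (powerBasisAux' hg) (mulLeftOfMonic hG g z) i k =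
      (z * X ^ (k : ℕ)).coeff i := by
  rw [LinearMap.toMatrix_apply, powerBasisAux'_apply, mulLeftOfMonic_mk hG hgz,
    powerBasisAux'_repr_mk, (modByMonic_eq_self_iff hg).2]
  refine degree_lt_degree
    ((natDegree_mul_le.trans (add_le_add_right (natDegree_X_pow_le _) _)).trans_lt ?_)
  rw [hgz, hz.natDegree_mul hG]
  omega

theorem det_toMatrix_mulLeftOfMonic_submatrix_natAdd (hg : g.Monic) (hz : z.Monic)
    (hG : G.Monic) (hgz : g = z * G) (hdeg : z.natDegree + G.natDegree = g.natDegree) :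
    ((LinearMap.toMatrix (powerBasisAux' hG) (powerBasisAux' hg)
      (mulLeftOfMonic hG g z)).submatrix (Fin.cast hdeg ∘ Fin.natAdd z.natDegree) id).det = 1 := by
  have entry (i k : Fin G.natDegree) :
      (LinearMap.toMatrix (powerBasisAux' hG) (powerBasisAux' hg)
        (mulLeftOfMonic hG g z)).submatrix (Fin.cast hdeg ∘ Fin.natAdd z.natDegree) id i k =
        if (k : ℕ) ≤ z.natDegree + i then z.coeff (z.natDegree + i - k) else 0 := by
    rw [submatrix_apply, toMatrix_mulLeftOfMonic_apply hg hz hG hgz, coeff_mul_X_pow']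
    rfl
  rw [det_of_isUpperTriangular]
  · refine Finset.prod_eq_one fun i _ => ?_
    rw [entry, if_pos (by omega), Nat.add_sub_cancel, hz.coeff_natDegree]
  · intro i k hki
    rw [entry]
    split_ifs
    · exact coeff_eq_zero_of_natDegree_lt (by simp at hki; omega)
    · rfl

end AdjoinRoot

section Companion

open AdjoinRoot

variable {R : Type*} [CommRing R] [Nontrivial R] {g : R[X]}

theorem companion_eq_leftMulMatrix (hg : g.Monic) :
    companion g =
      (Algebra.leftMulMatrix (powerBasisAux' hg) (root g))ᵀ.submatrix Fin.rev Fin.rev := by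
  ext i j
  rw [submatrix_apply, transpose_apply, Algebra.leftMulMatrix_eq_repr_mul, powerBasisAux'_apply,
    ← mk_X, ← map_mul, powerBasisAux'_repr_mk, ← pow_succ']
  have hexp : g.natDegree - (i + 1) + 1 = g.natDegree - i := by omega
  simp only [companion, of_apply, Fin.val_rev, hexp]
  rcases eq_or_ne (i : ℕ) 0 with hi | hi
  · rw [if_pos hi, hi, Nat.sub_zero, hg.X_pow_natDegree_modByMonic, coeff_sub, coeff_X_pow,
      if_neg (by omega), zero_sub]
    congr 2
    omega
  · rw [if_neg hi, (modByMonic_eq_self_iff hg).2, coeff_X_pow]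
    · exact if_congr (by omega) rfl rfl
    · rw [degree_X_pow, degree_eq_natDegree hg.ne_zero]
      exact_mod_cast (by omega : g.natDegree - i < g.natDegree)

theorem aeval_companion (hg : g.Monic) (f : R[X]) :
    aeval (companion g) f =
      (Algebra.leftMulMatrix (powerBasisAux' hg) (mk g f))ᵀ.submatrix Fin.rev Fin.rev := by
  rw [companion_eq_leftMulMatrix hg, ← aeval_eq, ← aeval_algHom_apply, ← aeval_transpose]
  exact aeval_submatrix_equiv_self _ Fin.revPerm f

theorem det_submatrix_aeval_companion (hg : g.Monic) (f : R[X]) {l : Type*} [Fintype l]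
    [DecidableEq l] (ρ σ : l → Fin g.natDegree) :
    ((aeval (companion g) f).submatrix ρ σ).det =
      ((Algebra.leftMulMatrix (powerBasisAux' hg) (mk g f)).submatrix
        (Fin.rev ∘ σ) (Fin.rev ∘ ρ)).det := by
  rw [aeval_companion hg, submatrix_submatrix, ← transpose_submatrix, det_transpose]

theorem det_aeval_companion (hg : g.Monic) (f : R[X]) :
    (aeval (companion g) f).det = (Algebra.leftMulMatrix (powerBasisAux' hg) (mk g f)).det := by
  rw [aeval_companion hg]
  exact (det_submatrix_equiv_self Fin.revPerm _).trans (det_transpose _)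

end Companion

open AdjoinRoot in
theorem stmt6_general {R : Type*} [CommRing R]
    (g f z G F : R[X]) (hg : g.Monic) (hz : z.Monic) (hG : G.Monic)
    (hgz : g = z * G) (hfz : f = z * F) :
    (∀ ρ σ : Fin (G.natDegree + 1) → Fin g.natDegree,
      Function.Injective ρ → Function.Injective σ →
      ((Polynomial.aeval (companion g) f).submatrix ρ σ).det = 0) ∧
    (∀ ρ σ : Fin G.natDegree → Fin g.natDegree,
      Function.Injective ρ → Function.Injective σ →
      (Polynomial.aeval (companion G) F).det ∣
        ((Polynomial.aeval (companion g) f).submatrix ρ σ).det) ∧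
    (∀ d : R,
      (∀ ρ σ : Fin G.natDegree → Fin g.natDegree,
        Function.Injective ρ → Function.Injective σ →
        d ∣ ((Polynomial.aeval (companion g) f).submatrix ρ σ).det) →
      d ∣ (Polynomial.aeval (companion G) F).det) := by
  nontriviality R
  have hdeg : z.natDegree + G.natDegree = g.natDegree := by rw [hgz, hz.natDegree_mul hG]
  subst hfz
  have hminor {l : Type} [Fintype l] [DecidableEq l] (ρ σ : l → Fin g.natDegree) :=
    leftMulMatrix_mk_mul hg hG hgz F ▸ det_submatrix_aeval_companion hg (z * F) ρ σ
  rw [det_aeval_companion hG]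
  refine ⟨fun ρ σ _ _ => ?_, fun ρ σ _ _ => ?_, fun d hd => ?_⟩
  · rw [hminor, Matrix.mul_assoc]
    exact det_submatrix_mul_eq_zero_of_card_lt _ _ _ _ (by simp)
  · rw [hminor, det_submatrix_mul_mul]
    exact (dvd_mul_left _ _).mul_right _
  · have hd₀ := hd (Fin.rev ∘ Fin.castLE (hdeg ▸ Nat.le_add_left _ _))
      (Fin.rev ∘ Fin.cast hdeg ∘ Fin.natAdd z.natDegree)
      (Fin.rev_injective.comp (Fin.castLE_injective _))
      (Fin.rev_injective.comp ((Fin.cast_injective hdeg).comp (Fin.natAdd_injective _ _)))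
    rw [hminor, det_submatrix_mul_mul] at hd₀
    simp only [← Function.comp_assoc, Fin.rev_involutive.comp_self, Function.id_comp] at hd₀
    rwa [det_toMatrix_mulLeftOfMonic_submatrix_natAdd hg hz hG hgz hdeg,
      toMatrix_algHomOfDvd_submatrix_castLE, det_one, one_mul, mul_one] at hd₀

/-- Let `z` be the monic greatest common divisor of `f = z F` and `g = z G`
(`g`, `G` monic). Then, with `r = deg G` being the rank of `f(C_g)`, all
`(r+1) × (r+1)` minors of `f(C_g)` vanish, while the resultant
`Res(F, G) = det F(C_G)` is a gcd of the `r × r` minors of `f(C_g)`; i.e. the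
last non-zero determinantal divisor of `f(C_g)` is `Res(F, G)` up to units. -/
theorem stmt6 {R : Type*} [CommRing R] [IsDomain R] (hR : IsEDD R)
    (g f z G F : R[X]) (hg : g.Monic) (hz : z.Monic) (hG : G.Monic)
    (hzf : z ∣ f) (hzg : z ∣ g)
    (hgcd : ∀ w : R[X], w ∣ f → w ∣ g → w ∣ z)
    (hgz : g = z * G) (hfz : f = z * F) :
    (∀ ρ σ : Fin (G.natDegree + 1) → Fin g.natDegree,
      Function.Injective ρ → Function.Injective σ →
      ((Polynomial.aeval (companion g) f).submatrix ρ σ).det = 0) ∧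
    (∀ ρ σ : Fin G.natDegree → Fin g.natDegree,
      Function.Injective ρ → Function.Injective σ →
      (Polynomial.aeval (companion G) F).det ∣
        ((Polynomial.aeval (companion g) f).submatrix ρ σ).det) ∧
    (∀ d : R,
      (∀ ρ σ : Fin G.natDegree → Fin g.natDegree,
        Function.Injective ρ → Function.Injective σ →
        d ∣ ((Polynomial.aeval (companion g) f).submatrix ρ σ).det) →
      d ∣ (Polynomial.aeval (companion G) F).det) :=
  stmt6_general g f z G F hg hz hG hgz hfz
end

section
/- Let R be an elementary divisor domain, g(t) ∈ R[t] monic, and f(t) = f_1(t)f_2(t) with f_1, f_2 ∈ R[t]. If Res(f_1, g) and Res(f_2, g) are coprime in R, then the Smith form of f(C_g) equals the product of the Smith forms of f_1(C_g) and f_2(C_g). -/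
open Polynomial Matrix

/-- `S` is a Smith form of `M`: `S` is equivalent to `M` via unimodular matrices,
is diagonal, and its diagonal entries form a divisibility chain. -/
def IsSmithFormOf {R : Type*} [CommRing R] {n : ℕ}
    (S M : Matrix (Fin n) (Fin n) R) : Prop :=
  (∃ U V : Matrix (Fin n) (Fin n) R, IsUnit U.det ∧ IsUnit V.det ∧ U * M * V = S) ∧
  (∀ i j : Fin n, i ≠ j → S i j = 0) ∧
  (∀ i j : Fin n, i ≤ j → S i i ∣ S j j)

section Aux

variable {R : Type*} [CommRing R] {n : ℕ}

/-- Column expansion of the determinant of a product of rectangular matrices. -/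
lemma det_mul_expand {m ι : Type*} [Fintype m] [DecidableEq m] [Fintype ι]
    (X : Matrix m ι R) (Y : Matrix ι m R) :
    det (X * Y) = ∑ f : m → ι, (∏ i, Y (f i) i) * det (X.submatrix id f) := by
  simp only [det_apply', mul_apply, Finset.prod_univ_sum, Finset.mul_sum,
    Fintype.piFinset_univ]
  rw [Finset.sum_comm]
  refine Finset.sum_congr rfl fun f _ => ?_
  refine Finset.sum_congr rfl fun σ _ => ?_
  simp only [submatrix_apply, id]
  rw [Finset.prod_mul_distrib]
  ring

/-- `x` divides all `k × k` minors of `M`. -/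
def Dk (x : R) (k : ℕ) (M : Matrix (Fin n) (Fin n) R) : Prop :=
  ∀ r c : Fin k → Fin n, x ∣ (M.submatrix r c).det

lemma Dk.mul_right {x : R} {k : ℕ} {M : Matrix (Fin n) (Fin n) R}
    (h : Dk x k M) (P : Matrix (Fin n) (Fin n) R) : Dk x k (M * P) := by
  intro r c
  rw [Matrix.submatrix_mul M P r id c Function.bijective_id, det_mul_expand]
  refine Finset.dvd_sum fun f _ => Dvd.dvd.mul_left ?_ _
  rw [Matrix.submatrix_submatrix]
  simpa using h r f

lemma Dk.transpose {x : R} {k : ℕ} {M : Matrix (Fin n) (Fin n) R}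
    (h : Dk x k M) : Dk x k Mᵀ := by
  intro r c
  rw [← Matrix.transpose_submatrix, Matrix.det_transpose]
  exact h c r

lemma Dk.mul_left {x : R} {k : ℕ} {M : Matrix (Fin n) (Fin n) R}
    (h : Dk x k M) (P : Matrix (Fin n) (Fin n) R) : Dk x k (P * M) := by
  have := (h.transpose.mul_right Pᵀ).transpose
  rwa [← Matrix.transpose_mul, Matrix.transpose_transpose] at this

lemma strictMono_val_le {k : ℕ} (v : Fin k → ℕ) (hv : StrictMono v) :
    ∀ i : Fin k, (i : ℕ) ≤ v i := by
  intro ⟨iv, hiv⟩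
  induction iv with
  | zero => exact Nat.zero_le _
  | succ m ih =>
    have hm : m < k := Nat.lt_of_succ_lt hiv
    have h1 := ih hm
    have h2 : v ⟨m, hm⟩ < v ⟨m + 1, hiv⟩ := hv (by simp [Fin.lt_def])
    simp only [Fin.val_mk] at h1 h2 ⊢
    omega

lemma prod_low_dvd {d : Fin n → R} (hchain : ∀ i j : Fin n, i ≤ j → d i ∣ d j)
    {k : ℕ} (hk : k ≤ n) (r : Fin k → Fin n) (hr : Function.Injective r) :
    (∏ i : Fin k, d (Fin.castLE hk i)) ∣ ∏ i : Fin k, d (r i) := by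
  set T : Finset (Fin n) := Finset.univ.image r with hT
  have hcard : T.card = k := by
    rw [hT, Finset.card_image_of_injective _ hr, Finset.card_univ, Fintype.card_fin]
  have h1 : ∏ i : Fin k, d (r i) = ∏ x ∈ T, d x := by
    rw [hT, Finset.prod_image (fun a _ b _ h => hr h)]
  have h2 : ∏ x ∈ T, d x = ∏ i : Fin k, d (T.orderIsoOfFin hcard i) := by
    rw [← Finset.prod_coe_sort T d]
    exact Fintype.prod_equiv (T.orderIsoOfFin hcard).toEquiv.symm _ _ (by simp)
  rw [h1, h2]
  refine Finset.prod_dvd_prod_of_dvd _ _ fun i _ => hchain _ _ ?_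
  have hmono : StrictMono fun j : Fin k => ((T.orderIsoOfFin hcard j : Fin n) : ℕ) :=
    fun a b hab => (T.orderIsoOfFin hcard).strictMono hab
  have := strictMono_val_le _ hmono i
  simpa [Fin.le_def] using this

lemma chain_prod_dvd_minor {d₁ d₂ : Fin n → R}
    (h₁ : ∀ i j : Fin n, i ≤ j → d₁ i ∣ d₁ j) (h₂ : ∀ i j : Fin n, i ≤ j → d₂ i ∣ d₂ j)
    (W : Matrix (Fin n) (Fin n) R) {k : ℕ} (hk : k ≤ n)
    (r c : Fin k → Fin n) :
    (∏ i : Fin k, d₁ (Fin.castLE hk i)) * (∏ i : Fin k, d₂ (Fin.castLE hk i)) ∣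
      ((Matrix.diagonal d₁ * W * Matrix.diagonal d₂).submatrix r c).det := by
  have heq : (Matrix.diagonal d₁ * W * Matrix.diagonal d₂).submatrix r c =
      Matrix.diagonal (fun i => d₁ (r i)) * W.submatrix r c *
        Matrix.diagonal (fun j => d₂ (c j)) := by
    ext i j
    simp only [Matrix.submatrix_apply, Matrix.mul_diagonal, Matrix.diagonal_mul]
  rw [heq]
  by_cases hr : Function.Injective r
  · by_cases hc : Function.Injective c
    · rw [Matrix.det_mul, Matrix.det_mul, Matrix.det_diagonal, Matrix.det_diagonal]
      calc (∏ i : Fin k, d₁ (Fin.castLE hk i)) * ∏ i : Fin k, d₂ (Fin.castLE hk i)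
          ∣ (∏ i : Fin k, d₁ (r i)) * ∏ i : Fin k, d₂ (c i) :=
            mul_dvd_mul (prod_low_dvd h₁ hk r hr) (prod_low_dvd h₂ hk c hc)
        _ ∣ _ := ⟨(W.submatrix r c).det, by ring⟩
    · obtain ⟨i, j, hij, hne⟩ : ∃ i j, c i = c j ∧ i ≠ j := by
        rw [Function.Injective] at hc; push_neg at hc
        obtain ⟨i, j, hh1, hh2⟩ := hc; exact ⟨i, j, hh1, hh2⟩
      rw [Matrix.det_zero_of_column_eq hne (fun l => by
        simp only [Matrix.mul_diagonal, Matrix.diagonal_mul, Matrix.submatrix_apply, hij])]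
      exact dvd_zero _
  · obtain ⟨i, j, hij, hne⟩ : ∃ i j, r i = r j ∧ i ≠ j := by
      rw [Function.Injective] at hr; push_neg at hr
      obtain ⟨i, j, hh1, hh2⟩ := hr; exact ⟨i, j, hh1, hh2⟩
    rw [Matrix.det_zero_of_row_eq hne (by
      funext l
      simp only [Matrix.mul_diagonal, Matrix.diagonal_mul, Matrix.submatrix_apply, hij])]
    exact dvd_zero _

variable {S M : Matrix (Fin n) (Fin n) R}

lemma smith_diag (hS : IsSmithFormOf S M) :
    S = Matrix.diagonal (fun i => S i i) := by
  ext i j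
  by_cases h : i = j
  · subst h; simp
  · rw [hS.2.1 i j h, Matrix.diagonal_apply_ne _ h]

lemma smith_M_eq (hS : IsSmithFormOf S M) :
    ∃ U' V' : Matrix (Fin n) (Fin n) R, M = U' * S * V' := by
  obtain ⟨⟨U, V, hU, hV, hUV⟩, -, -⟩ := hS
  refine ⟨U⁻¹, V⁻¹, ?_⟩
  rw [← hUV, Matrix.mul_assoc U, Matrix.nonsing_inv_mul_cancel_left _ _ hU,
    Matrix.mul_assoc, Matrix.mul_nonsing_inv _ hV, Matrix.mul_one]

lemma smith_sub_det (hS : IsSmithFormOf S M) {k : ℕ} (hk : k ≤ n) :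
    (S.submatrix (Fin.castLE hk) (Fin.castLE hk)).det =
      ∏ i : Fin k, S (Fin.castLE hk i) (Fin.castLE hk i) := by
  have hd : S.submatrix (Fin.castLE hk) (Fin.castLE hk) =
      Matrix.diagonal (fun i => S (Fin.castLE hk i) (Fin.castLE hk i)) := by
    ext i j
    by_cases h : i = j
    · subst h; simp
    · rw [Matrix.submatrix_apply,
        hS.2.1 _ _ (fun hc => h (Fin.ext (by simpa using congrArg Fin.val hc))),
        Matrix.diagonal_apply_ne _ h]
  rw [hd, Matrix.det_diagonal]

lemma Dk.smith (hS : IsSmithFormOf S M) {k : ℕ} (hk : k ≤ n) :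
    Dk (∏ i : Fin k, S (Fin.castLE hk i) (Fin.castLE hk i)) k M := by
  obtain ⟨U', V', hMeq⟩ := smith_M_eq hS
  rw [hMeq]
  have hbase : Dk (∏ i : Fin k, S (Fin.castLE hk i) (Fin.castLE hk i)) k S := by
    intro r c
    have h := chain_prod_dvd_minor (d₁ := fun i => S i i) hS.2.2
      (d₂ := fun _ => (1 : R)) (fun _ _ _ => dvd_refl 1) 1 hk r c
    simp only [Finset.prod_const_one, mul_one, Matrix.mul_one, Matrix.diagonal_one] at h
    rwa [← smith_diag hS] at h
  exact (hbase.mul_left U').mul_right V'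

lemma dvd_of_Dk_smith (hS : IsSmithFormOf S M) {k : ℕ} (hk : k ≤ n) (x : R)
    (hx : Dk x k M) : x ∣ ∏ i : Fin k, S (Fin.castLE hk i) (Fin.castLE hk i) := by
  obtain ⟨U, V, hU, hV, hUV⟩ := hS.1
  have h1 := (hx.mul_left U).mul_right V
  rw [hUV] at h1
  have h2 := h1 (Fin.castLE hk) (Fin.castLE hk)
  rwa [smith_sub_det hS hk] at h2

lemma diag_zero_of_prod_zero [IsDomain R] {T : Matrix (Fin n) (Fin n) R}
    (hchain : ∀ i j : Fin n, i ≤ j → T i i ∣ T j j) {i : Fin n} (hk : (i : ℕ) ≤ n)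
    (h0 : (∏ j : Fin (i : ℕ), T (Fin.castLE hk j) (Fin.castLE hk j)) = 0) :
    T i i = 0 := by
  obtain ⟨j, -, hj⟩ := Finset.prod_eq_zero_iff.mp h0
  have hle : Fin.castLE hk j ≤ i := by simpa [Fin.le_def] using le_of_lt j.isLt
  have h := hchain _ _ hle
  rw [hj] at h
  exact zero_dvd_iff.mp h

lemma assoc_cancel [IsDomain R] {x y s t : R} (hx : x ≠ 0)
    (h1 : Associated x y) (h2 : Associated (x * s) (y * t)) : Associated s t := by
  obtain ⟨u, hu⟩ := h1
  obtain ⟨w, hw⟩ := h2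
  rw [← hu] at hw
  have h3 : s * (w : R) = (u : R) * t := by
    refine mul_left_cancel₀ hx ?_
    calc x * (s * (w : R)) = x * s * w := by ring
      _ = x * (u : R) * t := hw
      _ = x * ((u : R) * t) := by ring
  refine ⟨w * u⁻¹, ?_⟩
  calc s * ((w * u⁻¹ : Rˣ) : R) = (s * (w : R)) * ((u⁻¹ : Rˣ) : R) := by
        rw [Units.val_mul]; ring
    _ = ((u : R) * t) * ((u⁻¹ : Rˣ) : R) := by rw [h3]
    _ = t * ((u : R) * ((u⁻¹ : Rˣ) : R)) := by ring
    _ = t := by rw [Units.mul_inv, mul_one]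

end Aux

lemma smith_assoc_mul {R : Type*} [CommRing R] [IsDomain R] {n : ℕ}
    {A B S S₁ S₂ : Matrix (Fin n) (Fin n) R} (hcop : IsCoprime A.det B.det)
    (hS : IsSmithFormOf S (A * B)) (hS₁ : IsSmithFormOf S₁ A)
    (hS₂ : IsSmithFormOf S₂ B) :
    ∀ i : Fin n, Associated (S i i) ((S₁ * S₂) i i) := by
  classical
  have claim : ∀ (k : ℕ) (hk : k ≤ n),
      Associated (∏ i : Fin k, S (Fin.castLE hk i) (Fin.castLE hk i))
        ((∏ i : Fin k, S₁ (Fin.castLE hk i) (Fin.castLE hk i)) *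
          (∏ i : Fin k, S₂ (Fin.castLE hk i) (Fin.castLE hk i))) := by
    intro k hk
    set a := ∏ i : Fin k, S₁ (Fin.castLE hk i) (Fin.castLE hk i) with ha
    set b := ∏ i : Fin k, S₂ (Fin.castLE hk i) (Fin.castLE hk i) with hb
    set c := ∏ i : Fin k, S (Fin.castLE hk i) (Fin.castLE hk i) with hc
    -- a * b divides c
    have hab : a * b ∣ c := by
      refine dvd_of_Dk_smith hS hk _ ?_
      obtain ⟨P₁, Q₁, hAeq⟩ := smith_M_eq hS₁
      obtain ⟨P₂, Q₂, hBeq⟩ := smith_M_eq hS₂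
      have hinner : Dk (a * b) k (S₁ * (Q₁ * P₂) * S₂) := by
        intro r cc
        have h := chain_prod_dvd_minor hS₁.2.2 hS₂.2.2 (Q₁ * P₂) hk r cc
        rwa [← smith_diag hS₁, ← smith_diag hS₂] at h
      have h2 := (hinner.mul_left P₁).mul_right Q₂
      rwa [show P₁ * (S₁ * (Q₁ * P₂) * S₂) * Q₂ = A * B from by
        rw [hAeq, hBeq]; noncomm_ring] at h2
    by_cases hz : a * b = 0
    · -- then c = 0 as well
      have h0 : Dk (0 : R) k (A * B) := by
        rcases mul_eq_zero.mp hz with h | h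
        · have hd := Dk.smith hS₁ hk
          rw [← ha, h] at hd
          exact hd.mul_right B
        · have hd := Dk.smith hS₂ hk
          rw [← hb, h] at hd
          exact hd.mul_left A
      have hc0 : c = 0 := zero_dvd_iff.mp (dvd_of_Dk_smith hS hk 0 h0)
      rw [hc0, hz]
    · obtain ⟨ha0, hb0⟩ := mul_ne_zero_iff.mp hz
      obtain ⟨m, hm⟩ := hab
      have hDkM : Dk c k (A * B) := by
        have hd := Dk.smith hS hk
        rwa [← hc] at hd
      have h2 : c ∣ B.det ^ k * a := by
        have hD1 : Dk c k (B.det • A) := by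
          have h' := hDkM.mul_right B.adjugate
          rwa [Matrix.mul_assoc, Matrix.mul_adjugate, Matrix.mul_smul,
            Matrix.mul_one] at h'
        obtain ⟨U₁, V₁, hU₁, hV₁, hUV₁⟩ := hS₁.1
        have hD2 := (hD1.mul_left U₁).mul_right V₁
        have h3 := hD2 (Fin.castLE hk) (Fin.castLE hk)
        rw [show U₁ * (B.det • A) * V₁ = B.det • S₁ from by
          rw [Matrix.mul_smul, Matrix.smul_mul, hUV₁]] at h3
        rwa [Matrix.submatrix_smul, Pi.smul_apply, Pi.smul_apply, Matrix.det_smul, smith_sub_det hS₁ hk,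
          Fintype.card_fin, ← ha] at h3
      have h3 : c ∣ A.det ^ k * b := by
        have hD1 : Dk c k (A.det • B) := by
          have h' := hDkM.mul_left A.adjugate
          rwa [← Matrix.mul_assoc, Matrix.adjugate_mul, Matrix.smul_mul,
            Matrix.one_mul] at h'
        obtain ⟨U₂, V₂, hU₂, hV₂, hUV₂⟩ := hS₂.1
        have hD2 := (hD1.mul_left U₂).mul_right V₂
        have h4 := hD2 (Fin.castLE hk) (Fin.castLE hk)
        rw [show U₂ * (A.det • B) * V₂ = A.det • S₂ from by
          rw [Matrix.mul_smul, Matrix.smul_mul, hUV₂]] at h4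
        rwa [Matrix.submatrix_smul, Pi.smul_apply, Pi.smul_apply, Matrix.det_smul, smith_sub_det hS₂ hk,
          Fintype.card_fin, ← hb] at h4
      have hm1 : m ∣ B.det ^ k := by
        have h2' := h2; rw [hm] at h2'
        have hh : a * (b * m) ∣ a * B.det ^ k := by
          have e1 : a * (b * m) = a * b * m := by ring
          rw [e1]
          calc a * b * m ∣ B.det ^ k * a := h2'
            _ = a * B.det ^ k := mul_comm _ _
        exact dvd_trans (dvd_mul_left m b) ((mul_dvd_mul_iff_left ha0).mp hh)
      have hm2 : m ∣ A.det ^ k := by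
        have h3' := h3; rw [hm] at h3'
        have hh : b * (a * m) ∣ b * A.det ^ k := by
          have e1 : b * (a * m) = a * b * m := by ring
          rw [e1]
          calc a * b * m ∣ A.det ^ k * b := h3'
            _ = b * A.det ^ k := mul_comm _ _
        exact dvd_trans (dvd_mul_left m a) ((mul_dvd_mul_iff_left hb0).mp hh)
      have hu : IsUnit m := (hcop.pow (n := k) (m := k)).isUnit_of_dvd' hm2 hm1
      rw [hm]
      exact associated_mul_unit_left _ m hu
  -- conclude
  intro i
  have hk1 : (i : ℕ) + 1 ≤ n := i.isLt
  have hk : (i : ℕ) ≤ n := le_of_lt i.isLt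
  have hX : (S₁ * S₂) i i = S₁ i i * S₂ i i := by
    rw [Matrix.mul_apply]
    rw [Finset.sum_eq_single i (fun j _ hj => by
      rw [hS₁.2.1 i j (fun h => hj h.symm), zero_mul])
      (fun h => absurd (Finset.mem_univ i) h)]
  rw [hX]
  have hsplit : ∀ (T : Matrix (Fin n) (Fin n) R),
      ∏ j : Fin ((i : ℕ) + 1), T (Fin.castLE hk1 j) (Fin.castLE hk1 j) =
        (∏ j : Fin (i : ℕ), T (Fin.castLE hk j) (Fin.castLE hk j)) * T i i := by
    intro T
    rw [Fin.prod_univ_castSucc]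
    congr 1
  have hc1 := claim ((i : ℕ) + 1) hk1
  have hck := claim (i : ℕ) hk
  rw [hsplit S, hsplit S₁, hsplit S₂] at hc1
  by_cases hcz : (∏ j : Fin (i : ℕ), S (Fin.castLE hk j) (Fin.castLE hk j)) = 0
  · have hSii : S i i = 0 := diag_zero_of_prod_zero hS.2.2 hk hcz
    obtain ⟨u, hu⟩ := hck
    rw [hcz, zero_mul] at hu
    rcases mul_eq_zero.mp hu.symm with h | h
    · have hS1ii : S₁ i i = 0 := diag_zero_of_prod_zero hS₁.2.2 hk h
      rw [hSii, hS1ii, zero_mul]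
    · have hS2ii : S₂ i i = 0 := diag_zero_of_prod_zero hS₂.2.2 hk h
      rw [hSii, hS2ii, mul_zero]
  · have hrearr : (∏ j : Fin (i : ℕ), S₁ (Fin.castLE hk j) (Fin.castLE hk j)) * S₁ i i *
        ((∏ j : Fin (i : ℕ), S₂ (Fin.castLE hk j) (Fin.castLE hk j)) * S₂ i i) =
        ((∏ j : Fin (i : ℕ), S₁ (Fin.castLE hk j) (Fin.castLE hk j)) *
          (∏ j : Fin (i : ℕ), S₂ (Fin.castLE hk j) (Fin.castLE hk j))) *
          (S₁ i i * S₂ i i) := by ring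
    rw [hrearr] at hc1
    exact assoc_cancel hcz hck hc1

/-- If `f = f₁ f₂` and the resultants `Res(f₁,g) = det f₁(C_g)` and
`Res(f₂,g) = det f₂(C_g)` are coprime, then the Smith form of `f(C_g)` is the
product of the Smith forms of `f₁(C_g)` and `f₂(C_g)` (up to units). -/
theorem stmt7 {R : Type*} [CommRing R] [IsDomain R] (hR : IsEDD R)
    (g f f₁ f₂ : R[X]) (hg : g.Monic) (hf : f = f₁ * f₂)
    (hcop : IsCoprime (Polynomial.aeval (companion g) f₁).det
                      (Polynomial.aeval (companion g) f₂).det)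
    (S S₁ S₂ : Matrix (Fin g.natDegree) (Fin g.natDegree) R)
    (hS : IsSmithFormOf S (Polynomial.aeval (companion g) f))
    (hS₁ : IsSmithFormOf S₁ (Polynomial.aeval (companion g) f₁))
    (hS₂ : IsSmithFormOf S₂ (Polynomial.aeval (companion g) f₂)) :
    ∀ i : Fin g.natDegree, Associated (S i i) ((S₁ * S₂) i i) := by
  have hM : (Polynomial.aeval (companion g)) f =
      (Polynomial.aeval (companion g)) f₁ * (Polynomial.aeval (companion g)) f₂ := by
    rw [hf, _root_.map_mul]
  rw [hM] at hS
  exact smith_assoc_mul hcop hS hS₁ hS₂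
end

section
/- Let R be an elementary divisor domain, g(t) = g_1(t)g_2(t) with g_1, g_2 monic in R[t], and f(t) ∈ R[t]. If Res(f, g_2) is a unit of R, then f(C_g) is equivalent over R to I_{deg g_2} ⊕ f(C_{g_1}). -/
/-!
Read the rows of `n × n` matrices as coordinates of polynomials of degree `< n = deg g` in the
basis `X ^ (n - 1), …, X, 1`. Then `v ↦ v * f(C_g)` is multiplication by `f` modulo `g`. In the
basis `g₁ X ^ (d₂ - 1), …, g₁, X ^ (d₁ - 1), …, 1`, which differs from the monomial one by a
unitriangular matrix, this map is block lower triangular with diagonal blocks `f(C_{g₂})` and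
`f(C_{g₁})`, since `f · g₁ p ≡ g₁ (f p mod g₂) (mod g₁ g₂)`. As `det f(C_{g₂}) = Res(f, g₂)` is a
unit, row operations then clear the off-diagonal block and turn `f(C_{g₂})` into the identity.
-/

open Polynomial Matrix

section Companion

variable {R : Type*} [CommRing R] {h : R[X]}

variable (h) in
noncomputable def companionCoords : R[X] →ₗ[R] Fin h.natDegree → R :=
  LinearMap.pi fun k => (lcoeff R (h.natDegree - 1 - k)).comp (modByMonicHom h)

lemma companionCoords_apply (p : R[X]) (k : Fin h.natDegree) :
    companionCoords h p k = (p %ₘ h).coeff (h.natDegree - 1 - k) := rfl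

lemma companionCoords_eq_of_dvd_sub (hh : h.Monic) {p q : R[X]} (hpq : h ∣ p - q) :
    companionCoords h p = companionCoords h q := by
  ext k
  rw [companionCoords_apply, companionCoords_apply, modByMonic_eq_of_dvd_sub hh hpq]

lemma companionCoords_of_degree_lt (hh : h.Monic) {p : R[X]} (hp : p.degree < h.degree)
    (k : Fin h.natDegree) : companionCoords h p k = p.coeff (h.natDegree - 1 - k) := by
  nontriviality R
  rw [companionCoords_apply, (modByMonic_eq_self_iff hh).2 hp]

lemma sum_companionCoords_smul_X_pow (hh : h.Monic) (p : R[X]) :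
    ∑ k, companionCoords h p k • X ^ (h.natDegree - 1 - k) = p %ₘ h := by
  by_cases h1 : h = 1
  · subst h1
    have : IsEmpty (Fin (1 : R[X]).natDegree) := by rw [natDegree_one]; infer_instance
    simp [modByMonic_one]
  simp only [companionCoords_apply]
  rw [Fin.sum_univ_eq_sum_range (fun k => (p %ₘ h).coeff (h.natDegree - 1 - k) •
      (X : R[X]) ^ (h.natDegree - 1 - k)),
    Finset.sum_range_reflect (fun k => (p %ₘ h).coeff k • (X : R[X]) ^ k)]
  simp only [smul_X_eq_monomial]
  exact (as_sum_range' _ _ (natDegree_modByMonic_lt p hh h1)).symm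

lemma vecMul_companion_apply (a : ℕ → R) (k : Fin h.natDegree) :
    ((fun m : Fin h.natDegree => a (h.natDegree - 1 - m)) ᵥ* companion h) k =
      -(a (h.natDegree - 1) * h.coeff (h.natDegree - 1 - k)) +
        if (k : ℕ) + 1 < h.natDegree then a (h.natDegree - 2 - k) else 0 := by
  have hentry : ∀ m : ℕ, (if m = 0 then -h.coeff (h.natDegree - 1 - k)
      else if m = (k : ℕ) + 1 then (1 : R) else 0) =
      (if m = 0 then -h.coeff (h.natDegree - 1 - k) else 0) +
        if m = (k : ℕ) + 1 then 1 else 0 := by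
    intro m; split_ifs <;> first | omega | simp
  simp only [vecMul, dotProduct, companion, of_apply]
  rw [Fin.sum_univ_eq_sum_range (fun m => a (h.natDegree - 1 - m) *
      if m = 0 then -h.coeff (h.natDegree - 1 - k) else if m = (k : ℕ) + 1 then 1 else 0)]
  simp only [hentry, mul_add, mul_ite, mul_zero, mul_one, Finset.sum_add_distrib,
    Finset.sum_ite_eq', Finset.mem_range, k.pos, if_true]
  rw [Nat.sub_zero, mul_neg, show h.natDegree - 1 - ((k : ℕ) + 1) = h.natDegree - 2 - k by omega]

lemma companionCoords_X_mul (hh : h.Monic) (p : R[X]) :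
    companionCoords h (X * p) = companionCoords h p ᵥ* companion h := by
  nontriviality R
  ext k
  have hd : 0 < h.natDegree := k.pos
  set r := p %ₘ h
  set c := r.coeff (h.natDegree - 1)
  have hr_deg : r.natDegree < h.natDegree :=
    natDegree_modByMonic_lt p hh (by rintro rfl; simp at hd)
  have hdeg : (X * r - C c * h).degree < h.degree := by
    rw [degree_eq_natDegree hh.ne_zero, degree_lt_iff_coeff_zero]
    intro m hm
    obtain ⟨m, rfl⟩ : ∃ m', m = m' + 1 := ⟨m - 1, by omega⟩
    rw [coeff_sub, coeff_X_mul, coeff_C_mul]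
    rcases (show m = h.natDegree - 1 ∨ h.natDegree ≤ m by omega) with rfl | hm'
    · rw [Nat.sub_add_cancel hd, hh.coeff_natDegree, mul_one, sub_self]
    · rw [coeff_eq_zero_of_natDegree_lt (by omega), coeff_eq_zero_of_natDegree_lt (by omega),
        mul_zero, sub_zero]
  have hrem : (X * p) %ₘ h = X * r - C c * h := by
    rw [modByMonic_eq_of_dvd_sub hh (p₂ := X * r)
      ⟨X * (p /ₘ h), by linear_combination (-X) * modByMonic_add_div p h⟩]
    exact (div_modByMonic_unique (C c) _ hh ⟨by ring, hdeg⟩).2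
  change _ = ((fun m : Fin h.natDegree => r.coeff (h.natDegree - 1 - m)) ᵥ* companion h) k
  rw [vecMul_companion_apply, companionCoords_apply, hrem, coeff_sub, coeff_C_mul]
  split_ifs with hk
  · rw [show h.natDegree - 1 - (k : ℕ) = h.natDegree - 2 - k + 1 by omega, coeff_X_mul]
    ring
  · rw [show h.natDegree - 1 - (k : ℕ) = 0 by omega, coeff_X_mul_zero]
    ring

lemma companionCoords_mul (hh : h.Monic) (q p : R[X]) :
    companionCoords h (q * p) = companionCoords h p ᵥ* aeval (companion h) q := by
  induction q using Polynomial.induction_on with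
  | C a =>
    rw [C_mul', map_smul, aeval_C, Algebra.algebraMap_eq_smul_one, vecMul_smul, vecMul_one]
  | add q q' hq hq' => rw [add_mul, map_add, hq, hq', map_add, vecMul_add]
  | monomial n a ih =>
    rw [show C a * X ^ (n + 1) * p = X * (C a * X ^ n * p) by ring, companionCoords_X_mul hh, ih,
      vecMul_vecMul, pow_succ, ← mul_assoc, map_mul (aeval (companion h)) (C a * X ^ n) X,
      aeval_X]

lemma aeval_companion_apply (hh : h.Monic) (q : R[X]) (i : Fin h.natDegree) :
    aeval (companion h) q i = companionCoords h (q * X ^ (h.natDegree - 1 - i)) := by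
  have hX : companionCoords h (X ^ (h.natDegree - 1 - i)) = Pi.single i 1 := by
    ext k
    rw [companionCoords_of_degree_lt hh
        (degree_lt_degree ((natDegree_X_pow_le _).trans_lt (by omega))),
      coeff_X_pow, Pi.single_apply]
    exact if_congr (by omega) rfl rfl
  rw [companionCoords_mul hh, hX, single_vecMul, one_smul]
  rfl

lemma sum_aeval_companion_apply_smul_X_pow (hh : h.Monic) (q : R[X]) (i : Fin h.natDegree) :
    ∑ k, aeval (companion h) q i k • X ^ (h.natDegree - 1 - k) =
      (q * X ^ (h.natDegree - 1 - i)) %ₘ h := by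
  rw [aeval_companion_apply hh]
  exact sum_companionCoords_smul_X_pow hh _

lemma vecMul_of_companionCoords {ι : Type*} [Fintype ι] (v : ι → R) (b : ι → R[X]) :
    v ᵥ* Matrix.of (fun l => companionCoords h (b l)) = companionCoords h (∑ l, v l • b l) := by
  ext k
  simp [vecMul, dotProduct, map_sum, map_smul]

lemma det_of_companionCoords (hh : h.Monic) (b : Fin h.natDegree → R[X]) (hb : ∀ k, (b k).Monic)
    (hdeg : ∀ k : Fin h.natDegree, (b k).natDegree = h.natDegree - 1 - k) :
    (Matrix.of fun k => companionCoords h (b k)).det = 1 := by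
  have hentry : ∀ k l, (Matrix.of fun k => companionCoords h (b k)) k l =
      (b k).coeff (h.natDegree - 1 - l) := fun k l =>
    companionCoords_of_degree_lt hh (degree_lt_degree (by rw [hdeg]; omega)) l
  have htri : (Matrix.of fun k => companionCoords h (b k)).IsUpperTriangular := by
    intro k l hlk
    rw [hentry]
    exact coeff_eq_zero_of_natDegree_lt (by rw [hdeg]; have : (l : ℕ) < k := hlk; omega)
  rw [det_of_isUpperTriangular htri]
  refine Finset.prod_eq_one fun k _ => ?_
  rw [hentry, ← hdeg, (hb k).coeff_natDegree]

end Companion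

lemma exists_isUnit_det_mul_fromBlocks_eq {R m n : Type*} [CommRing R] [Fintype m] [DecidableEq m]
    [Fintype n] [DecidableEq n] (A : Matrix m m R) (B : Matrix n m R) (D : Matrix n n R)
    (hA : IsUnit A.det) :
    ∃ U : Matrix (m ⊕ n) (m ⊕ n) R, IsUnit U.det ∧ U * fromBlocks A 0 B D = fromBlocks 1 0 0 D := by
  refine ⟨fromBlocks A⁻¹ 0 (-(B * A⁻¹)) 1, ?_, ?_⟩
  · rw [det_fromBlocks_zero₁₂, det_one, mul_one]
    exact isUnit_nonsing_inv_det A hA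
  · rw [fromBlocks_multiply]
    simp [Matrix.mul_assoc, nonsing_inv_mul A hA]

section Factor

variable {R : Type*} [CommRing R] {g₁ g₂ : R[X]}

variable (g₁ g₂) in
/-- Multiplication by any `f` modulo `g₁ g₂` is block lower triangular in this basis, with
diagonal blocks `f (C_{g₂})` and `f (C_{g₁})`. -/
noncomputable def factorBasis : Fin g₂.natDegree ⊕ Fin g₁.natDegree → R[X] :=
  Sum.elim (fun i => g₁ * X ^ (g₂.natDegree - 1 - i)) (fun j => X ^ (g₁.natDegree - 1 - j))

lemma monic_factorBasis (hg₁ : g₁.Monic) (l : Fin g₂.natDegree ⊕ Fin g₁.natDegree) :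
    (factorBasis g₁ g₂ l).Monic := by
  rcases l with i | j
  exacts [hg₁.mul (monic_X_pow _), monic_X_pow _]

lemma natDegree_factorBasis [Nontrivial R] (hg₁ : g₁.Monic)
    (l : Fin g₂.natDegree ⊕ Fin g₁.natDegree) :
    (factorBasis g₁ g₂ l).natDegree = g₂.natDegree + g₁.natDegree - 1 - finSumFinEquiv l := by
  rcases l with i | j
  · have := i.2
    simp only [factorBasis, Sum.elim_inl, hg₁.natDegree_mul (monic_X_pow _), natDegree_X_pow,
      finSumFinEquiv_apply_left, Fin.val_castAdd]
    omega
  · simp only [factorBasis, Sum.elim_inr, natDegree_X_pow, finSumFinEquiv_apply_right,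
      Fin.val_natAdd]
    omega

lemma exists_companionCoords_factorBasis_mul_aeval (hg₁ : g₁.Monic) (hg₂ : g₂.Monic) (f : R[X]) :
    ∃ B, Matrix.of (fun l => companionCoords (g₁ * g₂) (factorBasis g₁ g₂ l)) *
        aeval (companion (g₁ * g₂)) f =
      fromBlocks (aeval (companion g₂) f) 0 B (aeval (companion g₁) f) *
        Matrix.of (fun l => companionCoords (g₁ * g₂) (factorBasis g₁ g₂ l)) := by
  set q : Fin g₁.natDegree → R[X] := fun j => (f * X ^ (g₁.natDegree - 1 - j)) /ₘ g₁
  set M := fromBlocks (aeval (companion g₂) f) 0 (Matrix.of fun j => companionCoords g₂ (q j))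
    (aeval (companion g₁) f)
  refine ⟨Matrix.of fun j => companionCoords g₂ (q j), ?_⟩
  funext l
  rw [mul_apply_eq_vecMul, mul_apply_eq_vecMul, vecMul_of_companionCoords]
  change companionCoords _ (factorBasis g₁ g₂ l) ᵥ* _ = _
  rw [← companionCoords_mul (hg₁.mul hg₂)]
  apply companionCoords_eq_of_dvd_sub (hg₁.mul hg₂)
  rcases l with i | j
  · have hrow : ∑ m, M (.inl i) m • factorBasis g₁ g₂ m =
        g₁ * ((f * X ^ (g₂.natDegree - 1 - i)) %ₘ g₂) := by
      rw [← sum_aeval_companion_apply_smul_X_pow hg₂, Finset.mul_sum]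
      simp [M, Fintype.sum_sum_type, factorBasis]
    rw [hrow, factorBasis, Sum.elim_inl]
    exact ⟨(f * X ^ (g₂.natDegree - 1 - i)) /ₘ g₂,
      by linear_combination (-g₁) * modByMonic_add_div (f * X ^ (g₂.natDegree - 1 - i)) g₂⟩
  · have hrow : ∑ m, M (.inr j) m • factorBasis g₁ g₂ m =
        g₁ * (q j %ₘ g₂) + (f * X ^ (g₁.natDegree - 1 - j)) %ₘ g₁ := by
      rw [← sum_aeval_companion_apply_smul_X_pow hg₁, ← sum_companionCoords_smul_X_pow hg₂,
        Finset.mul_sum]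
      simp [M, Fintype.sum_sum_type, factorBasis]
    rw [hrow, factorBasis, Sum.elim_inr]
    exact ⟨q j /ₘ g₂, by
      linear_combination -modByMonic_add_div (f * X ^ (g₁.natDegree - 1 - j)) g₁ -
        g₁ * modByMonic_add_div (q j) g₂⟩

end Factor

/-- If `g = g₁ g₂` with `g₁, g₂` monic and `Res(f, g₂) = det f(C_{g₂})` is a unit
of `R`, then `f(C_g)` is equivalent over `R` to `I_{deg g₂} ⊕ f(C_{g₁})`. -/
theorem stmt10 {R : Type*} [CommRing R] [IsDomain R]
    (g g₁ g₂ f : R[X]) (hg₁ : g₁.Monic) (hg₂ : g₂.Monic) (hg : g = g₁ * g₂)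
    (hres : IsUnit (Polynomial.aeval (companion g₂) f).det) :
    letI e : Fin g₂.natDegree ⊕ Fin g₁.natDegree ≃ Fin g.natDegree :=
      finSumFinEquiv.trans (finCongr
        (show g₂.natDegree + g₁.natDegree = g.natDegree by
          rw [hg, Polynomial.Monic.natDegree_mul hg₁ hg₂, Nat.add_comm]))
    ∃ U V : Matrix (Fin g.natDegree) (Fin g.natDegree) R,
      IsUnit U.det ∧ IsUnit V.det ∧
      U * Polynomial.aeval (companion g) f * V =
        Matrix.reindex e e
          (Matrix.fromBlocks (1 : Matrix (Fin g₂.natDegree) (Fin g₂.natDegree) R) 0 0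
            (Polynomial.aeval (companion g₁) f)) := by
  subst hg
  set e : Fin g₂.natDegree ⊕ Fin g₁.natDegree ≃ Fin (g₁ * g₂).natDegree :=
    finSumFinEquiv.trans (finCongr (by rw [hg₁.natDegree_mul hg₂, Nat.add_comm]))
  obtain ⟨B, hsim⟩ := exists_companionCoords_factorBasis_mul_aeval hg₁ hg₂ f
  obtain ⟨U, hU, hUM⟩ := exists_isUnit_det_mul_fromBlocks_eq _ B (aeval (companion g₁) f) hres
  set P : Matrix (Fin (g₁ * g₂).natDegree) (Fin (g₁ * g₂).natDegree) R :=
    Matrix.of fun k => companionCoords (g₁ * g₂) (factorBasis g₁ g₂ (e.symm k))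
  have hP : P.det = 1 := by
    refine det_of_companionCoords (hg₁.mul hg₂) _ (fun k => monic_factorBasis hg₁ _) fun k => ?_
    have hk : (finSumFinEquiv (e.symm k) : ℕ) = k := by simp [e]
    have hdeg := hg₁.natDegree_mul hg₂
    rw [natDegree_factorBasis hg₁, hk]
    omega
  have hPsim : P * aeval (companion (g₁ * g₂)) f = reindex e e
      (fromBlocks (aeval (companion g₂) f) 0 B (aeval (companion g₁) f)) * P := by
    have h := congrArg (·.submatrix e.symm id) hsim
    rwa [submatrix_mul _ _ _ id _ Function.bijective_id, submatrix_id_id,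
      submatrix_mul _ _ _ e.symm _ e.symm.bijective] at h
  refine ⟨reindex e e U * P, P⁻¹, ?_, ?_, ?_⟩
  · rw [det_mul, det_reindex_self, hP, mul_one]
    exact hU
  · rw [det_nonsing_inv, hP, Ring.inverse_one]
    exact isUnit_one
  · rw [Matrix.mul_assoc _ P, hPsim, ← Matrix.mul_assoc, Matrix.mul_assoc _ P,
      mul_nonsing_inv P (by rw [hP]; exact isUnit_one), Matrix.mul_one, ← hUM]
    exact reindexLinearEquiv_mul R R e e e _ _
end

section
/- Let R be a GCD domain, g(t) ∈ R[t] monic, and suppose f(t) ≡ h(t) mod g(t) with deg h(t) < deg g(t). Then the content of f(t) divides the content of h(t). -/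
open Polynomial

namespace Polynomial

variable {R : Type*} [CommRing R]

theorem modByMonic_eq_of_eq_add_mul [Nontrivial R] {f g h q : R[X]} (hg : g.Monic)
    (hdeg : h.degree < g.degree) (hfh : f = h + g * q) : f %ₘ g = h :=
  (div_modByMonic_unique q h hg ⟨hfh.symm, hdeg⟩).2

variable [NormalizedGCDMonoid R]

/-- Reduction modulo `g` is `R`-linear, so the content of `f` survives in `f %ₘ g`. -/
theorem content_dvd_content_modByMonic (f g : R[X]) : f.content ∣ (f %ₘ g).content := by
  rw [dvd_content_iff_C_dvd]
  conv_rhs => rw [f.eq_C_content_mul_primPart, ← smul_eq_C_mul, smul_modByMonic, smul_eq_C_mul]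
  exact dvd_mul_right _ _

end Polynomial

/-- Over a GCD domain: if `g` is monic, `f ≡ h (mod g)` and `deg h < deg g`, then the
content of `f` divides the content of `h`. -/
theorem stmt13 {R : Type*} [CommRing R] [IsDomain R] [NormalizedGCDMonoid R]
    (f g h q : R[X]) (hg : g.Monic) (hdeg : h.degree < g.degree)
    (hfh : f = h + g * q) :
    f.content ∣ h.content :=
  modByMonic_eq_of_eq_add_mul hg hdeg hfh ▸ content_dvd_content_modByMonic f g
end

section
/- Let m ≥ n ≥ 1 and let Φ_m, Φ_n ∈ ℤ[t] be cyclotomic polynomials, and C_{Φ_n} the companion matrix of Φ_n. Then the Smith normal form of the integer matrix Φ_m(C_{Φ_n}) is: the zero matrix if m = n; p·I if m = n·p^k for a prime p and k ≥ 1; and the identity matrix I otherwise. -/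
open Polynomial Matrix

/-!
Let `C` be the companion matrix of `Φ_n` and `d = φ(n)` its size. As `Φ_n` is the characteristic
polynomial of `C`, `Φ_n(C) = 0` and so `C^n = 1`. For `N = nt` and `r ≥ 1`,
`∏_{e ∣ Nr, e ∤ N} Φ_e = (X^{Nr} - 1)/(X^N - 1) = ∑_{i<r} X^{Ni}` takes the value `r` at `C`, so
the integers `det Φ_e(C)` over these `e` multiply to `r^d`. Modulo `p`, `Φ_n` divides `Φ_{np^j}`,
so `p` divides every entry of `Φ_{np^j}(C)`. For `r = p^a` with `p ∤ t`, the `a` indices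
`e = np^j` (`1 ≤ j ≤ a`) thus already account for a factor `p^{ad}`, which forces
`|det Φ_{np^j}(C)| = p^d` and `|det Φ_e(C)| = 1` for every other `e`. Every `m ∤ n` is such an `e`:
take a prime `p` with `v_p(m) > v_p(n)`, `a = v_p(m)` and `t = m / p^a`.
-/

namespace Polynomial

theorem cyclotomic_dvd_cyclotomic_mul_prime_pow (R : Type*) [Ring R] {p : ℕ} [Fact p.Prime]
    [CharP R p] (n k : ℕ) : cyclotomic n R ∣ cyclotomic (n * p ^ k) R := by
  induction k with
  | zero => simp
  | succ k ih =>
    refine ih.trans ?_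
    rw [pow_succ, ← mul_assoc]
    by_cases h : p ∣ n * p ^ k
    · rw [cyclotomic_mul_prime_dvd_eq_pow R h]
      exact dvd_pow_self _ (Fact.out : p.Prime).ne_zero
    · rw [cyclotomic_mul_prime_eq_pow_of_not_dvd R h]
      exact dvd_pow_self _ (Nat.sub_ne_zero_of_lt (Fact.out : p.Prime).one_lt)

theorem prod_cyclotomic_sdiff_divisors (R : Type*) [CommRing R] {N r : ℕ} (hN : 0 < N)
    (hr : 0 < r) :
    ∏ e ∈ (N * r).divisors \ N.divisors, cyclotomic e R = ∑ i ∈ Finset.range r, X ^ (N * i) := by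
  refine (monic_X_pow_sub_C (1 : R) hN.ne').isRegular.right ?_
  simp only [C_1]
  rw [← prod_cyclotomic_eq_X_pow_sub_one hN,
    Finset.prod_sdiff (Nat.divisors_subset_of_dvd (by positivity) (dvd_mul_right N r)),
    prod_cyclotomic_eq_X_pow_sub_one (by positivity), prod_cyclotomic_eq_X_pow_sub_one hN]
  simp_rw [pow_mul]
  rw [geom_sum_mul]

theorem pow_eq_one_of_aeval_cyclotomic_eq_zero {R S : Type*} [CommRing R] [Ring S] [Algebra R S]
    {a : S} {n : ℕ} (h : aeval a (cyclotomic n R) = 0) : a ^ n = 1 := by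
  obtain ⟨q, hq⟩ := cyclotomic.dvd_X_pow_sub_one n R
  have := congrArg (aeval a) hq
  rwa [map_mul, h, zero_mul, map_sub, map_pow, aeval_X, map_one, sub_eq_zero] at this

end Polynomial

theorem AdjoinRoot.minpoly_root_of_monic {R : Type*} [CommRing R] {g : R[X]} (hg : g.Monic) :
    minpoly R (root g) = g := by
  nontriviality R
  refine (minpoly.unique' R _ hg (by simp [aeval_eq]) fun q hq => ?_).symm
  refine or_iff_not_imp_left.2 fun hq0 h0 => ?_
  have := (powerBasis' hg).dim_le_degree_of_root hq0 h0
  rw [powerBasis'_dim, ← degree_eq_natDegree hg.ne_zero] at this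
  exact this.not_gt hq

section Companion

variable {R : Type*} [CommRing R] {g : R[X]}

theorem companion_eq_transpose_reindex_leftMulMatrix (hg : g.Monic) :
    companion g = (reindex (Fin.revPerm : Equiv.Perm (Fin g.natDegree)) Fin.revPerm
      (Algebra.leftMulMatrix (AdjoinRoot.powerBasis' hg).basis (AdjoinRoot.root g)))ᵀ := by
  -- `(powerBasis' hg).dim` is `g.natDegree` only after unfolding, so the entries are stated and
  -- rewritten at indices of type `Fin g.natDegree` rather than by rewriting the whole matrix.
  have h (i j : Fin g.natDegree) : Algebra.leftMulMatrix (AdjoinRoot.powerBasis' hg).basis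
      (AdjoinRoot.root g) i j =
        if (j : ℕ) + 1 = g.natDegree then -g.coeff i else if (i : ℕ) = j + 1 then 1 else 0 := by
    have := congr_fun₂ (AdjoinRoot.powerBasis' hg).leftMulMatrix i j
    rwa [PowerBasis.minpolyGen_eq, AdjoinRoot.powerBasis'_gen,
      AdjoinRoot.minpoly_root_of_monic hg] at this
  ext i j
  refine Eq.trans ?_ (h (Fin.rev j) (Fin.rev i)).symm
  simp only [companion, of_apply, Fin.val_rev]
  have := i.isLt
  split_ifs <;> first | rfl | omega | (congr 2; omega)

theorem charpoly_companion (hg : g.Monic) : (companion g).charpoly = g := by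
  rw [companion_eq_transpose_reindex_leftMulMatrix hg]
  exact (charpoly_transpose _).trans <| (charpoly_reindex _ _).trans <|
    (charpoly_leftMulMatrix _).trans <| AdjoinRoot.minpoly_root_of_monic hg

theorem aeval_companion_self (hg : g.Monic) : aeval (companion g) g = 0 := by
  simpa [charpoly_companion hg] using aeval_self_charpoly (companion g)

end Companion

namespace Matrix

theorem exists_eq_smul_of_forall_dvd {ι : Type*} {M : Matrix ι ι ℤ} {c : ℤ}
    (h : ∀ i j, c ∣ M i j) : ∃ N : Matrix ι ι ℤ, M = c • N :=
  ⟨M.map (· / c), by ext i j; simp [Int.mul_ediv_cancel' (h i j)]⟩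

variable {ι : Type*} [Fintype ι] [DecidableEq ι]

theorem map_intCast_aeval {S : Type*} [CommRing S] (A : Matrix ι ι ℤ) (f : ℤ[X]) :
    (aeval A f).map (Int.cast : ℤ → S) = aeval (A.map Int.cast) (f.map (Int.castRingHom S)) := by
  rw [← algebraMap_int_eq, aeval_map_algebraMap]
  exact (aeval_algHom_apply ((Algebra.ofId ℤ S).mapMatrix (m := ι)) A f).symm

theorem exists_isUnit_det_mul_mul_eq_smul_one {R : Type*} [CommRing R] {M N : Matrix ι ι R}
    {c : R} (hM : M = c • N) (hN : IsUnit N.det) :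
    ∃ U V : Matrix ι ι R, IsUnit U.det ∧ IsUnit V.det ∧ U * M * V = c • 1 :=
  ⟨N⁻¹, 1, isUnit_nonsing_inv_det N hN, by simp, by
    rw [Matrix.mul_one, hM, Matrix.mul_smul, nonsing_inv_mul N hN]⟩

theorem prod_det_aeval_cyclotomic_sdiff_divisors {R : Type*} [CommRing R] {A : Matrix ι ι R}
    {N r : ℕ} (hA : A ^ N = 1) (hN : 0 < N) (hr : 0 < r) :
    ∏ e ∈ (N * r).divisors \ N.divisors, (aeval A (cyclotomic e R)).det =
      (r : R) ^ Fintype.card ι := by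
  have := map_prod (detMonoidHom.comp
    ((aeval (R := R) A : R[X] →ₐ[R] Matrix ι ι R) : R[X] →* Matrix ι ι R))
    (fun e => cyclotomic e R) ((N * r).divisors \ N.divisors)
  simp only [MonoidHom.comp_apply, MonoidHom.coe_coe, coe_detMonoidHom] at this
  rw [← this, prod_cyclotomic_sdiff_divisors R hN hr]
  simp only [map_sum, map_pow, aeval_X, pow_mul, hA, one_pow, Finset.sum_const,
    Finset.card_range, nsmul_one]
  rw [← diagonal_natCast, det_diagonal, Finset.prod_const, Finset.card_univ]

end Matrix

theorem Finset.eq_of_prod_eq_pow_card {ι : Type*} [DecidableEq ι] {s J : Finset ι} {x : ι → ℕ}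
    {b : ℕ} (hb : b ≠ 0) (hJ : J ⊆ s) (hdvd : ∀ e ∈ J, b ∣ x e)
    (hprod : ∏ e ∈ s, x e = b ^ J.card) :
    (∀ e ∈ J, x e = b) ∧ ∀ e ∈ s \ J, x e = 1 := by
  have eq_one_of_prod_eq_one {t : Finset ι} {f : ι → ℕ} (h : ∏ e ∈ t, f e = 1) :
      ∀ e ∈ t, f e = 1 := fun e he => Nat.eq_one_of_dvd_one (h ▸ Finset.dvd_prod_of_mem f he)
  have hsplit : ∏ e ∈ s, x e = b ^ J.card * ((∏ e ∈ J, x e / b) * ∏ e ∈ s \ J, x e) := by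
    rw [← Finset.prod_sdiff hJ, ← Finset.prod_const, mul_comm (∏ e ∈ s \ J, _), ← mul_assoc,
      ← Finset.prod_mul_distrib, Finset.prod_congr rfl fun e he => Nat.mul_div_cancel' (hdvd e he)]
  rw [hsplit, ← mul_one (b ^ J.card), mul_assoc, one_mul] at hprod
  obtain ⟨hJ1, hs1⟩ := mul_eq_one.1 (Nat.eq_of_mul_eq_mul_left (by positivity) hprod)
  refine ⟨fun e he => ?_, eq_one_of_prod_eq_one hs1⟩
  rw [← Nat.mul_div_cancel' (hdvd e he), eq_one_of_prod_eq_one hJ1 e he, mul_one]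

section CyclotomicAtMatrix

variable {ι : Type*} [Fintype ι] [DecidableEq ι] {A : Matrix ι ι ℤ} {n : ℕ}

theorem dvd_aeval_cyclotomic_mul_prime_pow_apply {p : ℕ} (hp : p.Prime)
    (hA : aeval A (cyclotomic n ℤ) = 0) (k : ℕ) (i j : ι) :
    (p : ℤ) ∣ aeval A (cyclotomic (n * p ^ k) ℤ) i j := by
  have := Fact.mk hp
  obtain ⟨q, hq⟩ := cyclotomic_dvd_cyclotomic_mul_prime_pow (ZMod p) n k
  have h0 : (aeval A (cyclotomic (n * p ^ k) ℤ)).map (Int.cast : ℤ → ZMod p) = 0 := by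
    rw [map_intCast_aeval, map_cyclotomic, hq, map_mul, ← map_cyclotomic n (Int.castRingHom _),
      ← map_intCast_aeval, hA, Matrix.map_zero _ Int.cast_zero, zero_mul]
  rw [← ZMod.intCast_zmod_eq_zero_iff_dvd]
  exact congr_fun₂ h0 i j

theorem natAbs_det_aeval_cyclotomic_of_mem_divisors_sdiff {t p : ℕ}
    (hA : aeval A (cyclotomic n ℤ) = 0) (hn : 0 < n) (ht : 0 < t) (hp : p.Prime) (hpt : ¬p ∣ t)
    (a : ℕ) :
    (∀ j ∈ Finset.Icc 1 a, (aeval A (cyclotomic (n * p ^ j) ℤ)).det.natAbs = p ^ Fintype.card ι) ∧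
    ∀ e ∈ (n * t * p ^ a).divisors \ (n * t).divisors,
      e ∉ (Finset.Icc 1 a).image (n * p ^ ·) → (aeval A (cyclotomic e ℤ)).det.natAbs = 1 := by
  set J := (Finset.Icc 1 a).image (n * p ^ ·)
  have hJ : J ⊆ (n * t * p ^ a).divisors \ (n * t).divisors := by
    simp only [J, Finset.subset_iff, Finset.mem_image, Finset.mem_Icc, Finset.mem_sdiff,
      Nat.mem_divisors]
    rintro _ ⟨j, ⟨hj1, hja⟩, rfl⟩
    refine ⟨⟨mul_dvd_mul (dvd_mul_right n t) (pow_dvd_pow p hja), ?_⟩, fun ⟨hdvd, _⟩ => hpt ?_⟩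
    · exact (Nat.mul_pos (Nat.mul_pos hn ht) (pow_pos hp.pos a)).ne'
    · exact (dvd_pow_self p (by omega)).trans (Nat.dvd_of_mul_dvd_mul_left hn hdvd)
  have hcard : J.card = a := by
    rw [Finset.card_image_of_injective _ fun i j h =>
      Nat.pow_right_injective hp.two_le (Nat.eq_of_mul_eq_mul_left hn h), Nat.card_Icc,
      Nat.add_sub_cancel]
  have hdvd : ∀ e ∈ J, p ^ Fintype.card ι ∣ (aeval A (cyclotomic e ℤ)).det.natAbs := by
    simp only [J, Finset.mem_image]
    rintro _ ⟨j, -, rfl⟩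
    obtain ⟨N, hN⟩ :=
      exists_eq_smul_of_forall_dvd (dvd_aeval_cyclotomic_mul_prime_pow_apply hp hA j)
    rw [hN, det_smul, Int.natAbs_mul, Int.natAbs_pow, Int.natAbs_natCast]
    exact dvd_mul_right _ _
  have hprod : ∏ e ∈ (n * t * p ^ a).divisors \ (n * t).divisors,
      (aeval A (cyclotomic e ℤ)).det.natAbs = (p ^ Fintype.card ι) ^ J.card := by
    have hAnt : A ^ (n * t) = 1 := by
      rw [pow_mul, pow_eq_one_of_aeval_cyclotomic_eq_zero hA, one_pow]
    have := congrArg Int.natAbsHom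
      (prod_det_aeval_cyclotomic_sdiff_divisors hAnt (by positivity) (pow_pos hp.pos a))
    simp only [map_prod, map_pow, Int.natAbsHom_apply, Int.natAbs_natCast] at this
    rw [this, hcard, ← pow_mul, ← pow_mul, mul_comm]
  obtain ⟨hJeq, hrest⟩ := Finset.eq_of_prod_eq_pow_card (pow_ne_zero _ hp.ne_zero) hJ hdvd hprod
  exact ⟨fun j hj => hJeq _ (Finset.mem_image_of_mem _ hj),
    fun e he heJ => hrest e (Finset.mem_sdiff.2 ⟨he, heJ⟩)⟩

theorem natAbs_det_aeval_cyclotomic_mul_prime_pow {p k : ℕ}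
    (hA : aeval A (cyclotomic n ℤ) = 0) (hn : 0 < n) (hp : p.Prime) (hk : 1 ≤ k) :
    (aeval A (cyclotomic (n * p ^ k) ℤ)).det.natAbs = p ^ Fintype.card ι :=
  (natAbs_det_aeval_cyclotomic_of_mem_divisors_sdiff hA hn one_pos hp hp.not_dvd_one k).1 k
    (Finset.mem_Icc.2 ⟨hk, le_rfl⟩)

theorem isUnit_det_aeval_cyclotomic {m : ℕ} (hA : aeval A (cyclotomic n ℤ) = 0) (hn : 0 < n)
    (hm : m ≠ 0) (hmn : ¬m ∣ n) (hpow : ∀ p k, p.Prime → 1 ≤ k → m ≠ n * p ^ k) :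
    IsUnit (aeval A (cyclotomic m ℤ)).det := by
  obtain ⟨p, hlt⟩ : ∃ p, n.factorization p < m.factorization p := by
    by_contra! h
    exact hmn ((Nat.factorization_le_iff_dvd hm hn.ne').1 h)
  have hp : p.Prime := by
    by_contra h
    simp [Nat.factorization_eq_zero_of_not_prime _ h] at hlt
  set a := m.factorization p
  have hm_mem : m ∈ (n * (m / p ^ a) * p ^ a).divisors \ (n * (m / p ^ a)).divisors := by
    rw [Finset.mem_sdiff, Nat.mem_divisors, Nat.mem_divisors, mul_assoc,
      Nat.div_mul_cancel (Nat.ordProj_dvd m p)]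
    refine ⟨⟨dvd_mul_left m n, by positivity⟩, fun ⟨hdvd, _⟩ => hlt.not_ge ?_⟩
    have : p ^ a ∣ n * (m / p ^ a) := (Nat.ordProj_dvd m p).trans hdvd
    exact (hp.pow_dvd_iff_le_factorization hn.ne').1
      (((Nat.coprime_ordCompl hp hm).pow_left a).dvd_of_dvd_mul_right this)
  have hm_not : m ∉ (Finset.Icc 1 a).image (n * p ^ ·) := by
    simp only [Finset.mem_image, Finset.mem_Icc, not_exists, not_and]
    exact fun j hj h => hpow p j hp hj.1 h.symm
  exact Int.isUnit_iff_natAbs_eq.2 <| (natAbs_det_aeval_cyclotomic_of_mem_divisors_sdiff hA hn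
    (Nat.ordCompl_pos p hm) hp (Nat.not_dvd_ordCompl hp hm) a).2 m hm_mem hm_not

end CyclotomicAtMatrix

/-- For `m ≥ n ≥ 1`, the Smith normal form of `Φ_m(C_{Φ_n})` over `ℤ` is: the zero
matrix if `m = n`; `p·I` if `m = n·p^k` for a prime `p` and `k ≥ 1`; and the identity
matrix otherwise. -/
theorem stmt14 (m n : ℕ) (hn : 1 ≤ n) (hmn : n ≤ m) :
    letI M := Polynomial.aeval (companion (Polynomial.cyclotomic n ℤ))
      (Polynomial.cyclotomic m ℤ)
    (m = n → ∃ U V, IsUnit U.det ∧ IsUnit V.det ∧ U * M * V = 0) ∧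
    (∀ p k : ℕ, p.Prime → 1 ≤ k → m = n * p ^ k →
      ∃ U V, IsUnit U.det ∧ IsUnit V.det ∧ U * M * V = (p : ℤ) • 1) ∧
    (m ≠ n → (¬ ∃ p k : ℕ, p.Prime ∧ 1 ≤ k ∧ m = n * p ^ k) →
      ∃ U V, IsUnit U.det ∧ IsUnit V.det ∧ U * M * V = 1) := by
  have hA := aeval_companion_self (cyclotomic.monic n ℤ)
  refine ⟨?_, ?_, ?_⟩
  · rintro rfl
    exact ⟨1, 1, by simp, by simp, by simp [hA]⟩
  · rintro p k hp hk rfl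
    obtain ⟨N, hN⟩ :=
      exists_eq_smul_of_forall_dvd (dvd_aeval_cyclotomic_mul_prime_pow_apply hp hA k)
    have hdet := natAbs_det_aeval_cyclotomic_mul_prime_pow hA hn hp hk
    rw [hN, det_smul, Int.natAbs_mul, Int.natAbs_pow, Int.natAbs_natCast] at hdet
    exact exists_isUnit_det_mul_mul_eq_smul_one hN <| Int.isUnit_iff_natAbs_eq.2 <|
      (Nat.mul_eq_left (pow_ne_zero _ hp.ne_zero)).1 hdet
  · intro hne hnot
    have hunit := isUnit_det_aeval_cyclotomic hA hn (by omega)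
      (fun h => hne (le_antisymm (Nat.le_of_dvd hn h) hmn)) fun p k hp hk h => hnot ⟨p, k, hp, hk, h⟩
    simpa using exists_isUnit_det_mul_mul_eq_smul_one (one_smul ℤ _).symm hunit
end

section
/- Let p be a prime with gcd(n, p) = 1, n ≥ 1, k ≥ 1, and m = n·p^k. Then there exists Ψ(t) ∈ ℤ[t] such that Φ_m(t) ≡ p·Ψ(t) (mod Φ_n(t)) in ℤ[t]. -/
open Polynomial

/-- For a prime `p` with `gcd(n, p) = 1`, `n ≥ 1`, `k ≥ 1`, `m = n·p^k`, there exists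
`Ψ ∈ ℤ[t]` with `Φ_m(t) ≡ p·Ψ(t) (mod Φ_n(t))`. -/
theorem stmt16 (p n k m : ℕ) (hp : p.Prime) (hn : 1 ≤ n) (hcop : Nat.gcd n p = 1)
    (hk : 1 ≤ k) (hm : m = n * p ^ k) :
    ∃ Ψ : Polynomial ℤ,
      Polynomial.cyclotomic n ℤ ∣
        Polynomial.cyclotomic m ℤ - Polynomial.C (p : ℤ) * Ψ := by
  haveI : Fact p.Prime := ⟨hp⟩
  have hpn : ¬ p ∣ n := (hp.coprime_iff_not_dvd).mp (Nat.coprime_comm.mp hcop)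
  set e := p ^ k - p ^ (k - 1) with he
  have he1 : 1 ≤ e := by
    have : p ^ (k - 1) < p ^ k := Nat.pow_lt_pow_right hp.one_lt (by omega)
    omega
  -- in ZMod p: cyclotomic m = cyclotomic n ^ e
  have hmod : Polynomial.map (Int.castRingHom (ZMod p)) (cyclotomic m ℤ - cyclotomic n ℤ ^ e)
      = 0 := by
    rw [Polynomial.map_sub, Polynomial.map_pow, map_cyclotomic_int, map_cyclotomic_int, hm,
      mul_comm n (p ^ k), cyclotomic_mul_prime_pow_eq (ZMod p) hpn hk, sub_self]
  have hdvd : Polynomial.C ((p : ℤ)) ∣ cyclotomic m ℤ - cyclotomic n ℤ ^ e := by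
    rw [Polynomial.C_dvd_iff_dvd_coeff]
    intro i
    have := Polynomial.ext_iff.1 hmod i
    rwa [Polynomial.coeff_map, eq_intCast, Polynomial.coeff_zero,
      ZMod.intCast_zmod_eq_zero_iff_dvd] at this
  obtain ⟨Ψ, hΨ⟩ := hdvd
  refine ⟨Ψ, ?_⟩
  have : cyclotomic m ℤ - Polynomial.C (p : ℤ) * Ψ = cyclotomic n ℤ ^ e := by
    rw [← hΨ]; ring
  rw [this]
  exact dvd_pow_self _ (by omega)
end
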